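/- arXiv:1906.06164 — 9 statements merged into one kernel-verified Lean document; each statement's English description precedes it below -/
import Mathlib

section
/- Let d ≥ 1 be an integer and p ∈ (0,1). A pmf q on {0,…,d} has mean dp if and only if there exists a d-dimensional exchangeable Bernoulli vector X = (X_1,…,X_d) with marginal parameter p such that the number of defaults S_d = X_1 + … + X_d has pmf q; moreover, in that case q(j) = C(d,j)·f_j, where f_j is the common value of the joint pmf of X on any point of {0,1}^d with exactly j coordinates equal to 1. In particular, the class S_d(p) of pmfs of S_d arising from exchangeable Bernoulli vectors with marginal p coincides with the class D(dp) of all pmfs on {0,…,d} with mean dp. -/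
/-!
Spreading the mass `q j` uniformly over the `C(n, j)` points of `{0,1}ⁿ` with `j` ones gives an
exchangeable law under which `S = X₁ + ⋯ + Xₙ` has law `q`. Since `E[S] = ∑ᵢ P(Xᵢ = 1)` for every
law and exchangeability makes all marginals equal, the marginals are `p` exactly when `E[S] = n p`.
-/

open Finset

namespace ExchangeableBernoulli

variable {ι : Type*} [Fintype ι]

def onesCount (x : ι → Bool) : ℕ := #{i | x i = true}

lemma onesCount_mem_range (x : ι → Bool) : onesCount x ∈ range (Fintype.card ι + 1) :=
  mem_range.2 (Nat.lt_succ_of_le (card_le_univ _))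

lemma onesCount_comp_perm (x : ι → Bool) (σ : Equiv.Perm ι) : onesCount (x ∘ σ) = onesCount x :=
  card_equiv σ (by simp)

noncomputable def levelUniform (q : ℕ → ℝ) (x : ι → Bool) : ℝ :=
  q (onesCount x) / (Fintype.card ι).choose (onesCount x)

lemma choose_mul_levelUniform (q : ℕ → ℝ) (x : ι → Bool) :
    ((Fintype.card ι).choose (onesCount x) : ℝ) * levelUniform q x = q (onesCount x) :=
  mul_div_cancel₀ _ (Nat.cast_ne_zero.2 (Nat.choose_pos (card_le_univ _)).ne')

lemma levelUniform_nonneg {q : ℕ → ℝ} (hq : ∀ j ∈ range (Fintype.card ι + 1), 0 ≤ q j)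
    (x : ι → Bool) : 0 ≤ levelUniform q x :=
  div_nonneg (hq _ (onesCount_mem_range x)) (Nat.cast_nonneg _)

lemma levelUniform_comp_perm (q : ℕ → ℝ) (σ : Equiv.Perm ι) (x : ι → Bool) :
    levelUniform q (x ∘ σ) = levelUniform q x := by
  rw [levelUniform, levelUniform, onesCount_comp_perm]

variable [DecidableEq ι]

def IsExchangeableBernoulli (p : ℝ) (f : (ι → Bool) → ℝ) : Prop :=
  (∀ x, 0 ≤ f x) ∧ ∑ x, f x = 1 ∧ (∀ (σ : Equiv.Perm ι) x, f (x ∘ σ) = f x) ∧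
    ∀ i, ∑ x with x i = true, f x = p

lemma sum_onesCount_mul (f : (ι → Bool) → ℝ) :
    ∑ x, (onesCount x : ℝ) * f x = ∑ i, ∑ x with x i = true, f x := by
  simp_rw [sum_filter]
  rw [sum_comm]
  refine sum_congr rfl fun x _ => ?_
  rw [← sum_filter, sum_const, nsmul_eq_mul, onesCount]

lemma sum_range_mul_eq_sum_onesCount_mul (q : ℕ → ℝ) (f : (ι → Bool) → ℝ)
    (hqf : ∀ j ∈ range (Fintype.card ι + 1), q j = ∑ x with onesCount x = j, f x) :
    ∑ j ∈ range (Fintype.card ι + 1), (j : ℝ) * q j = ∑ x, (onesCount x : ℝ) * f x := by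
  rw [← sum_fiberwise_of_maps_to fun x _ => onesCount_mem_range x]
  refine sum_congr rfl fun j hj => ?_
  rw [hqf j hj, mul_sum]
  exact sum_congr rfl fun x hx => by rw [(mem_filter.1 hx).2]

lemma card_filter_onesCount_eq (j : ℕ) :
    #{x : ι → Bool | onesCount x = j} = (Fintype.card ι).choose j := by
  rw [← card_univ, ← card_powersetCard]
  refine card_nbij' (fun x => univ.filter fun i => x i = true) (fun s i => decide (i ∈ s))
    ?_ ?_ ?_ ?_
  · intro x hx
    simp only [mem_coe, mem_filter, mem_univ, true_and] at hx
    simpa [mem_powersetCard, onesCount] using hx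
  · intro s hs
    simp only [mem_coe, mem_powersetCard] at hs
    rw [mem_coe, mem_filter]
    simpa [onesCount] using hs.2
  · intro x _
    funext i
    simp
  · intro s _
    ext i
    simp

lemma sum_filter_onesCount_levelUniform (q : ℕ → ℝ) {j : ℕ}
    (hj : j ∈ range (Fintype.card ι + 1)) :
    ∑ x : ι → Bool with onesCount x = j, levelUniform q x = q j := by
  have hchoose : ((Fintype.card ι).choose j : ℝ) ≠ 0 :=
    Nat.cast_ne_zero.2 (Nat.choose_pos (Nat.lt_succ_iff.1 (mem_range.1 hj))).ne'
  rw [sum_congr rfl fun x hx => by rw [levelUniform, (mem_filter.1 hx).2], sum_const,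
    card_filter_onesCount_eq, nsmul_eq_mul, mul_div_cancel₀ _ hchoose]

lemma sum_filter_apply_eq_of_perm_invariant {f : (ι → Bool) → ℝ}
    (hf : ∀ (σ : Equiv.Perm ι) x, f (x ∘ σ) = f x) (i i' : ι) :
    ∑ x with x i = true, f x = ∑ x with x i' = true, f x := by
  refine sum_nbij' (· ∘ Equiv.swap i i') (· ∘ Equiv.swap i i') ?_ ?_ ?_ ?_ ?_
  · simp
  · simp
  · intro x _; funext a; simp
  · intro x _; funext a; simp
  · intro x _; exact (hf _ x).symm

lemma card_mul_sum_filter_apply_of_perm_invariant {f : (ι → Bool) → ℝ}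
    (hf : ∀ (σ : Equiv.Perm ι) x, f (x ∘ σ) = f x) (i : ι) :
    Fintype.card ι * ∑ x with x i = true, f x = ∑ x, (onesCount x : ℝ) * f x := by
  rw [sum_onesCount_mul, sum_congr rfl fun i' _ => sum_filter_apply_eq_of_perm_invariant hf i' i,
    sum_const, card_univ, nsmul_eq_mul]

theorem sum_range_mul_eq_card_mul_iff {p : ℝ} {q : ℕ → ℝ}
    (hq0 : ∀ j ∈ range (Fintype.card ι + 1), 0 ≤ q j)
    (hq1 : ∑ j ∈ range (Fintype.card ι + 1), q j = 1) :
    ∑ j ∈ range (Fintype.card ι + 1), (j : ℝ) * q j = Fintype.card ι * p ↔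
      ∃ f : (ι → Bool) → ℝ, IsExchangeableBernoulli p f ∧
        (∀ j ∈ range (Fintype.card ι + 1), q j = ∑ x with onesCount x = j, f x) ∧
        ∀ j ∈ range (Fintype.card ι + 1), ∀ x, onesCount x = j →
          q j = (Fintype.card ι).choose j * f x := by
  constructor
  · intro hmean
    have hfib j (hj : j ∈ range (Fintype.card ι + 1)) :=
      (sum_filter_onesCount_levelUniform q hj).symm
    rw [sum_range_mul_eq_sum_onesCount_mul q _ hfib] at hmean
    refine ⟨levelUniform q, ⟨levelUniform_nonneg hq0, ?_, levelUniform_comp_perm q, fun i => ?_⟩,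
      hfib, fun j _ x hx => hx ▸ (choose_mul_levelUniform q x).symm⟩
    · rw [← hq1, ← sum_fiberwise_of_maps_to fun x _ => onesCount_mem_range x]
      exact sum_congr rfl fun j hj => (hfib j hj).symm
    · have hcard : (Fintype.card ι : ℝ) ≠ 0 := Nat.cast_ne_zero.2 (Fintype.card_pos_iff.2 ⟨i⟩).ne'
      apply mul_left_cancel₀ hcard
      rw [← hmean, card_mul_sum_filter_apply_of_perm_invariant (levelUniform_comp_perm q)]
  · rintro ⟨f, ⟨-, -, -, hmarg⟩, hfib, -⟩
    rw [sum_range_mul_eq_sum_onesCount_mul q f hfib, sum_onesCount_mul,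
      sum_congr rfl fun i _ => hmarg i, sum_const, card_univ, nsmul_eq_mul]

end ExchangeableBernoulli

open ExchangeableBernoulli in
theorem stmt_0_general (d : ℕ) (p : ℝ)
    (q : ℕ → ℝ) (hq0 : ∀ j ∈ Finset.range (d + 1), 0 ≤ q j)
    (hq1 : ∑ j ∈ Finset.range (d + 1), q j = 1) :
    (∑ j ∈ Finset.range (d + 1), (j : ℝ) * q j = d * p) ↔
    ∃ f : (Fin d → Bool) → ℝ,
      (∀ x, 0 ≤ f x) ∧
      (∑ x, f x = 1) ∧
      (∀ σ : Equiv.Perm (Fin d), ∀ x, f (x ∘ σ) = f x) ∧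
      (∀ i : Fin d,
        ∑ x ∈ Finset.univ.filter (fun x : Fin d → Bool => x i = true), f x = p) ∧
      (∀ j ∈ Finset.range (d + 1),
        q j = ∑ x ∈ Finset.univ.filter
          (fun x : Fin d → Bool => (Finset.univ.filter (fun i => x i = true)).card = j), f x) ∧
      (∀ j ∈ Finset.range (d + 1), ∀ x : Fin d → Bool,
        (Finset.univ.filter (fun i => x i = true)).card = j →
        q j = (d.choose j : ℝ) * f x) := by
  have h := sum_range_mul_eq_card_mul_iff (ι := Fin d) (p := p) (q := q)
  simp only [Fintype.card_fin, IsExchangeableBernoulli, and_assoc] at h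
  exact h hq0 hq1

/-- A pmf `q` on `{0,…,d}` has mean `d*p` iff there is a `d`-dimensional
exchangeable Bernoulli vector with marginal parameter `p` whose number of defaults has pmf `q`;
moreover, in that case `q j = C(d,j) * f_j` where `f_j` is the common value of the joint pmf on
points with exactly `j` ones. -/
theorem stmt_0 (d : ℕ) (hd : 1 ≤ d) (p : ℝ) (hp : p ∈ Set.Ioo (0 : ℝ) 1)
    (q : ℕ → ℝ) (hq0 : ∀ j ∈ Finset.range (d + 1), 0 ≤ q j)
    (hq1 : ∑ j ∈ Finset.range (d + 1), q j = 1) :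
    (∑ j ∈ Finset.range (d + 1), (j : ℝ) * q j = d * p) ↔
    ∃ f : (Fin d → Bool) → ℝ,
      (∀ x, 0 ≤ f x) ∧
      (∑ x, f x = 1) ∧
      (∀ σ : Equiv.Perm (Fin d), ∀ x, f (x ∘ σ) = f x) ∧
      (∀ i : Fin d,
        ∑ x ∈ Finset.univ.filter (fun x : Fin d → Bool => x i = true), f x = p) ∧
      (∀ j ∈ Finset.range (d + 1),
        q j = ∑ x ∈ Finset.univ.filter
          (fun x : Fin d → Bool => (Finset.univ.filter (fun i => x i = true)).card = j), f x) ∧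
      (∀ j ∈ Finset.range (d + 1), ∀ x : Fin d → Bool,
        (Finset.univ.filter (fun i => x i = true)).card = j →
        q j = (d.choose j : ℝ) * f x) :=
  stmt_0_general d p q hq0 hq1
end

section
/- Let d ≥ 1 be an integer and p ∈ (0,1), and let D(dp) be the convex set of pmfs on {0,…,d} with mean dp. The extreme points of D(dp) are exactly the following pmfs: (i) for every pair of integers j1, j2 with 0 ≤ j1 < pd < j2 ≤ d, the pmf r_{j1,j2} with r_{j1,j2}(j1) = (j2 − pd)/(j2 − j1), r_{j1,j2}(j2) = (pd − j1)/(j2 − j1), and r_{j1,j2}(j) = 0 otherwise; and (ii) if pd is an integer, additionally the Dirac pmf δ_{pd} concentrated at pd. -/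
/-!
A pmf `q` with mean `m` is extreme exactly when it is the only such pmf supported in
`supp q`: a point of an open segment between nonnegative vectors carries both endpoints'
supports, and conversely a nonzero `v` supported in `supp q` with `∑ v = ∑ j v_j = 0` lets `q`
move both ways. Three support points always carry such a `v` (two linear equations in three
unknowns), so an extreme point lives on one or two points, and there the two constraints
`∑ q = 1`, `∑ j q_j = m` determine it.
-/

open Finset Function Filter Topology

variable {ι : Type*}

/-- `D(m)` of the paper, with the values `j` of the outcomes generalized to `f j`. -/
def pmfsWithMean [Fintype ι] (f : ι → ℝ) (m : ℝ) : Set (ι → ℝ) :=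
  {q | (∀ j, 0 ≤ q j) ∧ ∑ j, q j = 1 ∧ ∑ j, f j * q j = m}

noncomputable def twoPointPmf [DecidableEq ι] (f : ι → ℝ) (m : ℝ) (a b : ι) : ι → ℝ :=
  Pi.single a ((f b - m) / (f b - f a)) + Pi.single b ((m - f a) / (f b - f a))

theorem twoPointPmf_apply [DecidableEq ι] (f : ι → ℝ) (m : ℝ) {a b : ι} (hab : a ≠ b) (j : ι) :
    twoPointPmf f m a b j =
      if j = a then (f b - m) / (f b - f a) else if j = b then (m - f a) / (f b - f a) else 0 := by
  by_cases hja : j = a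
  · subst hja; simp [twoPointPmf, hab]
  · by_cases hjb : j = b
    · subst hjb; simp [twoPointPmf, hja]
    · simp [twoPointPmf, hja, hjb]

theorem support_subset_of_mem_openSegment {x y q : ι → ℝ} (hx : 0 ≤ x) (hy : 0 ≤ y)
    (hq : q ∈ openSegment ℝ x y) : support x ⊆ support q := by
  obtain ⟨α, β, hα, hβ, -, rfl⟩ := hq
  intro j hj
  have := mul_pos hα ((hx j).lt_of_ne' hj)
  have := mul_nonneg hβ.le (hy j)
  simp only [mem_support, Pi.add_apply, Pi.smul_apply, smul_eq_mul]
  linarith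

theorem mem_extremePoints_of_forall_support_subset {S : Set (ι → ℝ)} (hS : ∀ x ∈ S, 0 ≤ x)
    {q : ι → ℝ} (hq : q ∈ S) (huniq : ∀ x ∈ S, support x ⊆ support q → x = q) :
    q ∈ S.extremePoints ℝ :=
  mem_extremePoints_iff_left.2 ⟨hq, fun x hx y hy hxy =>
    huniq x hx (support_subset_of_mem_openSegment (hS x hx) (hS y hy) hxy)⟩

theorem eq_zero_of_add_mem_of_sub_mem {E : Type*} [AddCommGroup E] [Module ℝ E] {S : Set E}
    {q v : E} (hq : q ∈ S.extremePoints ℝ) (hadd : q + v ∈ S) (hsub : q - v ∈ S) : v = 0 := by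
  have hseg : q ∈ openSegment ℝ (q + v) (q - v) :=
    ⟨1 / 2, 1 / 2, by norm_num, by norm_num, by norm_num, by module⟩
  simpa using (mem_extremePoints_iff_left.1 hq).2 _ hadd _ hsub hseg

theorem eventually_nonneg_add_smul [Finite ι] {q v : ι → ℝ} (hq : 0 ≤ q)
    (hv : support v ⊆ support q) : ∀ᶠ t in 𝓝 (0 : ℝ), 0 ≤ q + t • v := by
  simp only [Pi.le_def, Pi.zero_apply, Pi.add_apply, Pi.smul_apply, smul_eq_mul]
  refine eventually_all.2 fun j => ?_
  by_cases hvj : v j = 0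
  · exact .of_forall fun t => by simpa [hvj] using hq j
  have hqj : 0 < q j := (hq j).lt_of_ne' (hv hvj)
  have hlim : Tendsto (fun t : ℝ => q j + t * v j) (𝓝 0) (𝓝 (q j)) := by
    simpa using ((tendsto_id (x := 𝓝 (0 : ℝ))).mul_const (v j)).const_add (q j)
  exact (hlim.eventually_const_lt hqj).mono fun _ => le_of_lt

section pmfsWithMean

variable [Fintype ι] {f : ι → ℝ} {m : ℝ} {q : ι → ℝ}

theorem nonneg_of_mem_pmfsWithMean (hq : q ∈ pmfsWithMean f m) : 0 ≤ q := hq.1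

theorem add_mem_pmfsWithMean {w : ι → ℝ} (hq : q ∈ pmfsWithMean f m) (hw : 0 ≤ q + w)
    (hw1 : ∑ j, w j = 0) (hwf : ∑ j, f j * w j = 0) : q + w ∈ pmfsWithMean f m := by
  obtain ⟨-, hq1, hqf⟩ := hq
  refine ⟨hw, ?_, ?_⟩
  · simp [sum_add_distrib, hq1, hw1]
  · simp [mul_add, sum_add_distrib, hqf, hwf]

theorem notMem_extremePoints_of_support_subset {v : ι → ℝ} (hq : q ∈ pmfsWithMean f m)
    (hv : v ≠ 0) (hv1 : ∑ j, v j = 0) (hvf : ∑ j, f j * v j = 0)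
    (hsupp : support v ⊆ support q) : q ∉ (pmfsWithMean f m).extremePoints ℝ := by
  intro hext
  have hq0 := nonneg_of_mem_pmfsWithMean hq
  have hpos := eventually_nonneg_add_smul hq0 hsupp
  have hneg := eventually_nonneg_add_smul hq0 (v := -v) (by rwa [support_neg])
  obtain ⟨t, ⟨hpos, hneg⟩, ht⟩ :=
    ((hpos.and hneg).filter_mono nhdsWithin_le_nhds |>.and self_mem_nhdsWithin).exists
      (f := 𝓝[≠] (0 : ℝ))
  rw [smul_neg, ← sub_eq_add_neg] at hneg
  have hsums : ∑ j, (t • v) j = 0 ∧ ∑ j, f j * (t • v) j = 0 := by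
    simp only [Pi.smul_apply, smul_eq_mul, mul_left_comm (f _), ← mul_sum, hv1, hvf,
      mul_zero, and_self]
  have hadd := add_mem_pmfsWithMean hq hpos hsums.1 hsums.2
  have hsub := add_mem_pmfsWithMean hq (w := -(t • v)) (by rwa [← sub_eq_add_neg])
    (by simp only [Pi.neg_apply, sum_neg_distrib, hsums.1, neg_zero])
    (by simp only [Pi.neg_apply, mul_neg, sum_neg_distrib, hsums.2, neg_zero])
  rw [← sub_eq_add_neg] at hsub
  exact hv ((smul_eq_zero.1 (eq_zero_of_add_mem_of_sub_mem hext hadd hsub)).resolve_left ht)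

theorem eq_single_of_support_subset {a : ι} [DecidableEq ι] (hq : q ∈ pmfsWithMean f m)
    (hsupp : support q ⊆ {a}) : q = Pi.single a 1 ∧ f a = m := by
  obtain ⟨-, hq1, hqf⟩ := hq
  have hzero : ∀ j, j ≠ a → q j = 0 := fun j hj => notMem_support.1 fun h => hj (hsupp h)
  rw [Fintype.sum_eq_single a hzero] at hq1
  rw [Fintype.sum_eq_single a fun j hj => by rw [hzero j hj, mul_zero], hq1, mul_one] at hqf
  refine ⟨funext fun j => ?_, hqf⟩
  by_cases hja : j = a
  · subst hja; simp [hq1]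
  · simp [hja, hzero j hja]

theorem sum_mul_eq_add_of_support_subset {a b : ι} (hab : a ≠ b) (g : ι → ℝ)
    (hsupp : support q ⊆ {a, b}) : ∑ j, g j * q j = g a * q a + g b * q b :=
  Fintype.sum_eq_add a b hab fun j ⟨hja, hjb⟩ => by
    rw [notMem_support.1 fun h => (hsupp h).elim hja hjb, mul_zero]

theorem add_eq_one_and_eq_mean_of_support_subset {a b : ι} (hab : a ≠ b)
    (hq : q ∈ pmfsWithMean f m) (hsupp : support q ⊆ {a, b}) :
    q a + q b = 1 ∧ f a * q a + f b * q b = m := by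
  obtain ⟨-, hq1, hqf⟩ := hq
  have hsum := sum_mul_eq_add_of_support_subset hab (fun _ => 1) hsupp
  simp only [one_mul] at hsum
  rw [← hsum, ← sum_mul_eq_add_of_support_subset hab f hsupp]
  exact ⟨hq1, hqf⟩

theorem eq_twoPointPmf_of_support_subset [DecidableEq ι] {a b : ι} (hab : f a ≠ f b)
    (hq : q ∈ pmfsWithMean f m) (hsupp : support q ⊆ {a, b}) : q = twoPointPmf f m a b := by
  have hne : a ≠ b := fun h => hab (congrArg f h)
  obtain ⟨hq1, hqf⟩ := add_eq_one_and_eq_mean_of_support_subset hne hq hsupp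
  have hba : f b - f a ≠ 0 := sub_ne_zero.2 hab.symm
  funext j
  rw [twoPointPmf_apply f m hne]
  split_ifs with hja hjb
  · subst hja; field_simp; linear_combination f b * hq1 - hqf
  · subst hjb; field_simp; linear_combination hqf - f a * hq1
  · exact notMem_support.1 fun h => (hsupp h).elim hja hjb

theorem lt_and_lt_of_support_subset {a b : ι} (hab : f a < f b) (hq : q ∈ pmfsWithMean f m)
    (hsupp : support q ⊆ {a, b}) (ha : q a ≠ 0) (hb : q b ≠ 0) : f a < m ∧ m < f b := by
  have hne : a ≠ b := fun h => hab.ne (congrArg f h)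
  obtain ⟨hq1, hqf⟩ := add_eq_one_and_eq_mean_of_support_subset hne hq hsupp
  have hpa := mul_pos ((hq.1 a).lt_of_ne' ha) (sub_pos.2 hab)
  have hpb := mul_pos ((hq.1 b).lt_of_ne' hb) (sub_pos.2 hab)
  have hma : m - f a = q b * (f b - f a) := by linear_combination f a * hq1 - hqf
  have hbm : f b - m = q a * (f b - f a) := by linear_combination hqf - f b * hq1
  constructor <;> linarith

theorem support_subset_pair_of_mem_extremePoints [DecidableEq ι] (hf : Injective f)
    (hq : q ∈ (pmfsWithMean f m).extremePoints ℝ) {a b : ι} (hab : a ≠ b) (ha : q a ≠ 0)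
    (hb : q b ≠ 0) : support q ⊆ {a, b} := by
  intro c hc
  by_contra hcab
  simp only [Set.mem_insert_iff, Set.mem_singleton_iff, not_or] at hcab
  obtain ⟨hca, hcb⟩ := hcab
  set v : ι → ℝ := Pi.single a (f b - f c) + Pi.single b (f c - f a) + Pi.single c (f a - f b)
  refine notMem_extremePoints_of_support_subset hq.1 (v := v) (fun hv => ?_) ?_ ?_ ?_ hq
  · have hva := congrFun hv a
    simp only [v, Pi.add_apply, Pi.single_eq_same, Pi.single_eq_of_ne hab,
      Pi.single_eq_of_ne (Ne.symm hca), Pi.zero_apply, add_zero] at hva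
    exact hcb (hf (sub_eq_zero.1 hva)).symm
  · simp [v, sum_add_distrib]
  · simp [v, Pi.single_apply, mul_add, sum_add_distrib]
    ring
  · intro j hj
    have hsupp : support v ⊆ {a} ∪ {b} ∪ {c} :=
      (support_add _ _).trans (Set.union_subset_union ((support_add _ _).trans
        (Set.union_subset_union Pi.support_single_subset Pi.support_single_subset))
        Pi.support_single_subset)
    rcases hsupp hj with (rfl | rfl) | rfl <;> assumption

theorem twoPointPmf_mem_pmfsWithMean [DecidableEq ι] {a b : ι} (ha : f a < m) (hb : m < f b) :
    twoPointPmf f m a b ∈ pmfsWithMean f m := by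
  have hne : a ≠ b := fun h => by subst h; linarith
  have hba : f b - f a ≠ 0 := by linarith
  refine ⟨fun j => ?_, ?_, ?_⟩
  · rw [twoPointPmf_apply f m hne]
    split_ifs <;> first | rfl | exact div_nonneg (by linarith) (by linarith)
  · simp only [twoPointPmf, Pi.add_apply, sum_add_distrib, sum_pi_single',
      mem_univ, if_true]
    field_simp; ring
  · simp only [twoPointPmf, Pi.add_apply, mul_add, sum_add_distrib, Pi.single_apply,
      mul_ite, mul_zero, sum_ite_eq', mem_univ, if_true]
    field_simp; ring

theorem twoPointPmf_mem_extremePoints [DecidableEq ι] {a b : ι} (ha : f a < m) (hb : m < f b) :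
    twoPointPmf f m a b ∈ (pmfsWithMean f m).extremePoints ℝ := by
  refine mem_extremePoints_of_forall_support_subset (fun _ => nonneg_of_mem_pmfsWithMean)
    (twoPointPmf_mem_pmfsWithMean ha hb) fun x hx hsupp => ?_
  have hpair : support (twoPointPmf f m a b) ⊆ {a, b} :=
    (support_add _ _).trans (Set.union_subset_union Pi.support_single_subset
      Pi.support_single_subset)
  exact eq_twoPointPmf_of_support_subset (by linarith) hx (hsupp.trans hpair)

theorem single_mem_extremePoints [DecidableEq ι] {a : ι} (ha : f a = m) :
    Pi.single a 1 ∈ (pmfsWithMean f m).extremePoints ℝ := by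
  have hmem : Pi.single a 1 ∈ pmfsWithMean f m := by
    refine ⟨fun j => by rw [Pi.single_apply]; split_ifs <;> norm_num, by simp, ?_⟩
    simp [Pi.single_apply, ha]
  exact mem_extremePoints_of_forall_support_subset (fun _ => nonneg_of_mem_pmfsWithMean) hmem
    fun x hx hsupp => (eq_single_of_support_subset hx (hsupp.trans Pi.support_single_subset)).1

theorem exists_eq_of_mem_extremePoints [DecidableEq ι] (hf : Injective f)
    (hq : q ∈ (pmfsWithMean f m).extremePoints ℝ) :
    (∃ a b, f a < m ∧ m < f b ∧ q = twoPointPmf f m a b) ∨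
      (∃ a, f a = m ∧ q = Pi.single a 1) := by
  have hmem := hq.1
  obtain ⟨a, ha⟩ : ∃ a, q a ≠ 0 := by
    by_contra! h
    simpa [h] using hmem.2.1
  by_cases hb : ∃ b, b ≠ a ∧ q b ≠ 0
  · obtain ⟨b, hba, hb⟩ := hb
    have hsupp := support_subset_pair_of_mem_extremePoints hf hq hba.symm ha hb
    left
    rcases lt_or_gt_of_ne (hf.ne hba.symm) with hlt | hgt
    · obtain ⟨h1, h2⟩ := lt_and_lt_of_support_subset hlt hmem hsupp ha hb
      exact ⟨a, b, h1, h2, eq_twoPointPmf_of_support_subset hlt.ne hmem hsupp⟩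
    · rw [Set.pair_comm] at hsupp
      obtain ⟨h1, h2⟩ := lt_and_lt_of_support_subset hgt hmem hsupp hb ha
      exact ⟨b, a, h1, h2, eq_twoPointPmf_of_support_subset hgt.ne hmem hsupp⟩
  · have hsupp : support q ⊆ {a} := fun j hj => by_contra fun hja => hb ⟨j, hja, hj⟩
    obtain ⟨hqa, hfa⟩ := eq_single_of_support_subset hmem hsupp
    exact Or.inr ⟨a, hfa, hqa⟩

theorem mem_extremePoints_pmfsWithMean_iff [DecidableEq ι] (hf : Injective f) :
    q ∈ (pmfsWithMean f m).extremePoints ℝ ↔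
      (∃ a b, f a < m ∧ m < f b ∧ q = twoPointPmf f m a b) ∨
        (∃ a, f a = m ∧ q = Pi.single a 1) := by
  refine ⟨exists_eq_of_mem_extremePoints hf, ?_⟩
  rintro (⟨a, b, ha, hb, rfl⟩ | ⟨a, ha, rfl⟩)
  · exact twoPointPmf_mem_extremePoints ha hb
  · exact single_mem_extremePoints ha

end pmfsWithMean

theorem stmt_3_general (d : ℕ) (p : ℝ) (hp : p ∈ Set.Ioo (0 : ℝ) 1)
    (D : Set (Fin (d + 1) → ℝ))
    (hD : D = {q : Fin (d + 1) → ℝ |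
      (∀ j, 0 ≤ q j) ∧ (∑ j, q j = 1) ∧ (∑ j, (j.val : ℝ) * q j = p * d)})
    (q : Fin (d + 1) → ℝ) :
    q ∈ Set.extremePoints ℝ D ↔
      ((∃ j1 j2 : ℕ, (j1 : ℝ) < p * d ∧ p * d < (j2 : ℝ) ∧ j2 ≤ d ∧
          q = fun j : Fin (d + 1) =>
            if j.val = j1 then ((j2 : ℝ) - p * d) / ((j2 : ℝ) - (j1 : ℝ))
            else if j.val = j2 then (p * d - (j1 : ℝ)) / ((j2 : ℝ) - (j1 : ℝ))
            else 0) ∨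
        (∃ k : ℕ, (k : ℝ) = p * d ∧
          q = fun j : Fin (d + 1) => if j.val = k then 1 else 0)) := by
  have hmean : p * d < d + 1 := by nlinarith [hp.2, (Nat.cast_nonneg d : (0 : ℝ) ≤ d)]
  have hlt {j : ℕ} (hj : (j : ℝ) ≤ p * d) : j < d + 1 := by exact_mod_cast hj.trans_lt hmean
  have hinj : Injective fun j : Fin (d + 1) => (j.val : ℝ) :=
    Nat.cast_injective.comp Fin.val_injective
  rw [show D = pmfsWithMean (fun j : Fin (d + 1) => (j.val : ℝ)) (p * d) from hD,
    mem_extremePoints_pmfsWithMean_iff hinj]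
  refine or_congr ⟨?_, ?_⟩ ⟨?_, ?_⟩
  · rintro ⟨a, b, ha, hb, rfl⟩
    have hab : a ≠ b := fun h => by subst h; linarith
    refine ⟨a, b, ha, hb, Nat.lt_succ_iff.1 b.isLt, funext fun j => ?_⟩
    simp [twoPointPmf_apply _ _ hab, Fin.ext_iff]
  · rintro ⟨j1, j2, h1, h2, h2d, rfl⟩
    have hne : (⟨j1, hlt h1.le⟩ : Fin (d + 1)) ≠ ⟨j2, by omega⟩ := fun h => by
      simp only [Fin.mk.injEq] at h; subst h; linarith
    refine ⟨⟨j1, hlt h1.le⟩, ⟨j2, by omega⟩, h1, h2, funext fun j => ?_⟩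
    simp [twoPointPmf_apply _ _ hne, Fin.ext_iff]
  · rintro ⟨a, ha, rfl⟩
    exact ⟨a, ha, funext fun j => by simp [Pi.single_apply, Fin.ext_iff]⟩
  · rintro ⟨k, hk, rfl⟩
    exact ⟨⟨k, hlt hk.le⟩, hk, funext fun j => by simp [Pi.single_apply, Fin.ext_iff]⟩

/-- The extreme points of the convex set `D(dp)` of pmfs on `{0,…,d}` with mean
`dp` are exactly the two-point ray densities `r_{j1,j2}` (for `0 ≤ j1 < pd < j2 ≤ d`) and,
when `pd` is an integer, the Dirac pmf at `pd`. -/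
theorem stmt_3 (d : ℕ) (hd : 1 ≤ d) (p : ℝ) (hp : p ∈ Set.Ioo (0 : ℝ) 1)
    (D : Set (Fin (d + 1) → ℝ))
    (hD : D = {q : Fin (d + 1) → ℝ |
      (∀ j, 0 ≤ q j) ∧ (∑ j, q j = 1) ∧ (∑ j, (j.val : ℝ) * q j = p * d)})
    (q : Fin (d + 1) → ℝ) :
    q ∈ Set.extremePoints ℝ D ↔
      ((∃ j1 j2 : ℕ, (j1 : ℝ) < p * d ∧ p * d < (j2 : ℝ) ∧ j2 ≤ d ∧
          q = fun j : Fin (d + 1) =>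
            if j.val = j1 then ((j2 : ℝ) - p * d) / ((j2 : ℝ) - (j1 : ℝ))
            else if j.val = j2 then (p * d - (j1 : ℝ)) / ((j2 : ℝ) - (j1 : ℝ))
            else 0) ∨
        (∃ k : ℕ, (k : ℝ) = p * d ∧
          q = fun j : Fin (d + 1) => if j.val = k then 1 else 0)) :=
  stmt_3_general d p hp D hD q
end

section
/- Let d ≥ 1 be an integer and p ∈ (0,1). Every pmf q on {0,…,d} with mean dp can be written as a convex combination q = Σ_i λ_i r_i, where λ_i ≥ 0, Σ_i λ_i = 1, and the r_i range over the ray densities: the pmfs r_{j1,j2} (for integers 0 ≤ j1 < pd < j2 ≤ d) with r_{j1,j2}(j1) = (j2 − pd)/(j2 − j1), r_{j1,j2}(j2) = (pd − j1)/(j2 − j1), and r_{j1,j2}(j) = 0 otherwise, together with the Dirac pmf δ_{pd} when pd is an integer. -/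
/-! Let `D = ∑_{x_j > m} q_j (x_j - m)`; since `q` has mean `m`, also `D = ∑_{x_j ≤ m} q_j (m - x_j)`.
Mixing the two-point pmfs on `{a, b}` with `x_a ≤ m < x_b` with weights `q_a q_b (x_b - x_a) / D`
gives back `q`: the mass landing on `a` is `q_a ∑_b q_b (x_b - m) / D = q_a`, and symmetrically on `b`.
A pair with `x_a = m` contributes the Dirac pmf at `a`. If `D = 0`, then `q` lives on `{x = m}` and is a
mixture of Dirac pmfs. -/

open Finset

section LowerUpperPairs

variable {ι : Type*} [Fintype ι] {x : ι → ℝ} {m : ℝ} {q : ι → ℝ}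

lemma sum_lower_eq_sum_upper (hq1 : ∑ j, q j = 1) (hqm : ∑ j, x j * q j = m) :
    ∑ j with x j ≤ m, q j * (m - x j) = ∑ j with m < x j, q j * (x j - m) := by
  have hcentered : ∑ j, q j * (x j - m) = 0 := by
    simp_rw [mul_sub, sum_sub_distrib, ← sum_mul, hq1, mul_comm (q _), hqm, one_mul, sub_self]
  rw [← sum_filter_add_sum_filter_not univ (fun j => x j ≤ m)] at hcentered
  simp_rw [not_le] at hcentered
  have hneg : ∑ j with x j ≤ m, q j * (m - x j) = -∑ j with x j ≤ m, q j * (x j - m) := by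
    rw [← sum_neg_distrib]
    exact sum_congr rfl fun j _ => by ring
  linarith

lemma sum_pairs_lower_upper {V : Type*} [AddCommGroup V] [Module ℝ V]
    (hbal : ∑ j with x j ≤ m, q j * (m - x j) = ∑ j with m < x j, q j * (x j - m)) (f : ι → V) :
    ∑ a with x a ≤ m, ∑ b with m < x b, (q a * q b) • ((x b - m) • f a + (m - x a) • f b) =
      (∑ j with m < x j, q j * (x j - m)) • ∑ j, q j • f j := by
  have hlower : ∑ a with x a ≤ m, ∑ b with m < x b, (q a * q b) • (x b - m) • f a =
      (∑ j with m < x j, q j * (x j - m)) • ∑ a with x a ≤ m, q a • f a := by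
    rw [smul_sum]
    refine sum_congr rfl fun a _ => ?_
    rw [sum_smul]
    exact sum_congr rfl fun b _ => by simp only [smul_smul]; congr 1; ring
  have hupper : ∑ a with x a ≤ m, ∑ b with m < x b, (q a * q b) • (m - x a) • f b =
      (∑ j with m < x j, q j * (x j - m)) • ∑ b with m < x b, q b • f b := by
    rw [sum_comm, ← hbal, smul_sum]
    refine sum_congr rfl fun b _ => ?_
    rw [sum_smul]
    exact sum_congr rfl fun a _ => by simp only [smul_smul]; congr 1; ring
  simp_rw [smul_add, sum_add_distrib, hlower, hupper, ← smul_add]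
  rw [← sum_filter_add_sum_filter_not univ (fun j => x j ≤ m)]
  simp_rw [not_le]

lemma eq_of_sum_upper_eq_zero (hq0 : ∀ j, 0 ≤ q j)
    (hbal : ∑ j with x j ≤ m, q j * (m - x j) = ∑ j with m < x j, q j * (x j - m))
    (hD : ∑ j with m < x j, q j * (x j - m) = 0) {j : ι} (hj : q j ≠ 0) : x j = m := by
  by_contra hne
  rcases lt_or_gt_of_ne hne with hlt | hgt
  · have hterms := (sum_eq_zero_iff_of_nonneg fun i hi =>
      mul_nonneg (hq0 i) (sub_nonneg.2 (mem_filter.1 hi).2)).1 (hbal.trans hD) j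
    exact mul_ne_zero hj (sub_ne_zero.2 hlt.ne') (hterms (by simp [hlt.le]))
  · have hterms := (sum_eq_zero_iff_of_nonneg fun i hi =>
      mul_nonneg (hq0 i) (sub_nonneg.2 (mem_filter.1 hi).2.le)).1 hD j
    exact mul_ne_zero hj (sub_ne_zero.2 hgt.ne') (hterms (by simp [hgt]))

end LowerUpperPairs

section TwoPoint

variable {ι : Type*} [DecidableEq ι] (x : ι → ℝ) (m : ℝ)

/-- With `x j = j` this is the ray density `r_{a,b}`; it is `0` when `x a = x b`. -/
noncomputable def twoPoint (a b : ι) : ι → ℝ :=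
  (x b - x a)⁻¹ • ((x b - m) • Pi.single a 1 + (m - x a) • Pi.single b 1)

def raySet : Set (ι → ℝ) :=
  {r | ∃ a b, x a < m ∧ m < x b ∧ r = twoPoint x m a b} ∪ {r | ∃ a, x a = m ∧ r = Pi.single a 1}

variable {x m}

lemma twoPoint_apply {a b : ι} (hab : a ≠ b) (j : ι) :
    twoPoint x m a b j =
      if j = a then (x b - m) / (x b - x a) else if j = b then (m - x a) / (x b - x a) else 0 := by
  rcases eq_or_ne j a with rfl | hja
  · simp [twoPoint, hab, div_eq_inv_mul]
  · rcases eq_or_ne j b with rfl | hjb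
    · simp [twoPoint, hja, div_eq_inv_mul]
    · simp [twoPoint, hja, hjb]

lemma twoPoint_of_left_eq {a b : ι} (ha : x a = m) (hab : x a ≠ x b) :
    twoPoint x m a b = Pi.single a 1 := by
  subst ha
  rw [twoPoint, sub_self, zero_smul, add_zero, smul_smul, inv_mul_cancel₀ (sub_ne_zero.2 hab.symm),
    one_smul]

lemma twoPoint_mem_raySet {a b : ι} (ha : x a ≤ m) (hb : m < x b) :
    twoPoint x m a b ∈ raySet x m := by
  rcases ha.lt_or_eq with ha | ha
  · exact Or.inl ⟨a, b, ha, hb, rfl⟩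
  · exact Or.inr ⟨a, ha, twoPoint_of_left_eq ha (ha ▸ hb).ne⟩

lemma mul_sub_smul_twoPoint (c : ℝ) {a b : ι} (hab : x a < x b) :
    (c * (x b - x a)) • twoPoint x m a b =
      c • ((x b - m) • Pi.single a 1 + (m - x a) • Pi.single b 1) := by
  rw [twoPoint, smul_smul, mul_assoc, mul_inv_cancel₀ (sub_pos.2 hab).ne', mul_one]

end TwoPoint

section ConvexHull

variable {ι : Type*} [Fintype ι] [DecidableEq ι]

lemma sum_smul_piSingle_one (q : ι → ℝ) : ∑ j, q j • Pi.single j (1 : ℝ) = q := by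
  simp_rw [← Pi.single_smul', smul_eq_mul, mul_one]
  exact univ_sum_single q

lemma mem_convexHull_of_piSingle_mem {s : Set (ι → ℝ)} {q : ι → ℝ} (hq0 : ∀ j, 0 ≤ q j)
    (hq1 : ∑ j, q j = 1) (hs : ∀ j, q j ≠ 0 → Pi.single j 1 ∈ s) : q ∈ convexHull ℝ s := by
  have hsupp : ∑ j with q j ≠ 0, q j • Pi.single j (1 : ℝ) = q := by
    rw [sum_filter_of_ne fun j _ hj => left_ne_zero_of_smul hj, sum_smul_piSingle_one]
  rw [← hsupp]
  refine (convex_convexHull ℝ s).sum_mem (fun j _ => hq0 j) ?_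
    fun j hj => subset_convexHull ℝ s (hs j (mem_filter.1 hj).2)
  rwa [sum_filter_ne_zero]

theorem mem_convexHull_raySet {x : ι → ℝ} {m : ℝ} {q : ι → ℝ} (hq0 : ∀ j, 0 ≤ q j)
    (hq1 : ∑ j, q j = 1) (hqm : ∑ j, x j * q j = m) : q ∈ convexHull ℝ (raySet x m) := by
  have hbal := sum_lower_eq_sum_upper hq1 hqm
  set D := ∑ j with m < x j, q j * (x j - m)
  have hD0 : 0 ≤ D :=
    sum_nonneg fun j hj => mul_nonneg (hq0 j) (sub_nonneg.2 (mem_filter.1 hj).2.le)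
  rcases hD0.eq_or_lt with hD | hD
  · exact mem_convexHull_of_piSingle_mem hq0 hq1 fun j hj =>
      Or.inr ⟨j, eq_of_sum_upper_eq_zero hq0 hbal hD.symm hj, rfl⟩
  set P := (univ.filter fun a => x a ≤ m) ×ˢ (univ.filter fun b => m < x b) with hP
  let w : ι × ι → ℝ := fun ab => q ab.1 * q ab.2 * (x ab.2 - x ab.1)
  have hw : ∑ ab ∈ P, w ab = D := by
    have hmass := sum_pairs_lower_upper hbal fun _ => (1 : ℝ)
    simp only [smul_eq_mul, mul_one, hq1] at hmass
    rw [hP, sum_product]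
    exact (sum_congr rfl fun a _ => sum_congr rfl fun b _ => by ring).trans hmass
  have hwz : ∑ ab ∈ P, w ab • twoPoint x m ab.1 ab.2 = D • q := by
    rw [hP, sum_product, ← sum_smul_piSingle_one q, ← sum_pairs_lower_upper hbal]
    exact sum_congr rfl fun a ha => sum_congr rfl fun b hb =>
      mul_sub_smul_twoPoint _ (((mem_filter.1 ha).2).trans_lt (mem_filter.1 hb).2)
  have hcm : P.centerMass w (fun ab => twoPoint x m ab.1 ab.2) = q := by
    rw [centerMass, hw, hwz, inv_smul_smul₀ hD.ne']
  rw [← hcm]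
  refine P.centerMass_mem_convexHull (fun ab hab => ?_) (hw ▸ hD) fun ab hab => ?_
  all_goals obtain ⟨ha, hb⟩ := mem_product.1 (hP ▸ hab)
  · exact mul_nonneg (mul_nonneg (hq0 _) (hq0 _))
      (sub_nonneg.2 ((mem_filter.1 ha).2.trans (mem_filter.1 hb).2.le))
  · exact twoPoint_mem_raySet (mem_filter.1 ha).2 (mem_filter.1 hb).2

end ConvexHull

theorem stmt_5_general (d : ℕ) (p : ℝ)
    (R : Set (Fin (d + 1) → ℝ))
    (hR : R = {r : Fin (d + 1) → ℝ |
      (∃ j1 j2 : ℕ, (j1 : ℝ) < p * d ∧ p * d < (j2 : ℝ) ∧ j2 ≤ d ∧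
        r = fun j : Fin (d + 1) =>
          if j.val = j1 then ((j2 : ℝ) - p * d) / ((j2 : ℝ) - (j1 : ℝ))
          else if j.val = j2 then (p * d - (j1 : ℝ)) / ((j2 : ℝ) - (j1 : ℝ))
          else 0) ∨
      (∃ k : ℕ, (k : ℝ) = p * d ∧
        r = fun j : Fin (d + 1) => if j.val = k then 1 else 0)})
    (q : Fin (d + 1) → ℝ) (hq0 : ∀ j, 0 ≤ q j) (hq1 : ∑ j, q j = 1)
    (hqmean : ∑ j, (j.val : ℝ) * q j = p * d) :
    q ∈ convexHull ℝ R := by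
  refine convexHull_mono ?_ (mem_convexHull_raySet (x := fun j => (j.val : ℝ)) hq0 hq1 hqmean)
  rw [hR]
  rintro r (⟨a, b, ha, hb, rfl⟩ | ⟨a, ha, rfl⟩)
  · have hab : a ≠ b := ne_of_apply_ne (fun j : Fin (d + 1) => (j.val : ℝ)) (ha.trans hb).ne
    refine Or.inl ⟨a, b, ha, hb, b.is_le, funext fun j => ?_⟩
    simp only [twoPoint_apply hab, Fin.val_inj]
  · exact Or.inr ⟨a, ha, funext fun j => by simp only [Pi.single_apply, Fin.val_inj]⟩

/-- Every pmf on `{0,…,d}` with mean `dp` is a convex combination of the ray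
densities: the two-point pmfs `r_{j1,j2}` (for `0 ≤ j1 < pd < j2 ≤ d`) together with the Dirac
pmf at `pd` when `pd` is an integer. -/
theorem stmt_5 (d : ℕ) (hd : 1 ≤ d) (p : ℝ) (hp : p ∈ Set.Ioo (0 : ℝ) 1)
    (R : Set (Fin (d + 1) → ℝ))
    (hR : R = {r : Fin (d + 1) → ℝ |
      (∃ j1 j2 : ℕ, (j1 : ℝ) < p * d ∧ p * d < (j2 : ℝ) ∧ j2 ≤ d ∧
        r = fun j : Fin (d + 1) =>
          if j.val = j1 then ((j2 : ℝ) - p * d) / ((j2 : ℝ) - (j1 : ℝ))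
          else if j.val = j2 then (p * d - (j1 : ℝ)) / ((j2 : ℝ) - (j1 : ℝ))
          else 0) ∨
      (∃ k : ℕ, (k : ℝ) = p * d ∧
        r = fun j : Fin (d + 1) => if j.val = k then 1 else 0)})
    (q : Fin (d + 1) → ℝ) (hq0 : ∀ j, 0 ≤ q j) (hq1 : ∑ j, q j = 1)
    (hqmean : ∑ j, (j.val : ℝ) * q j = p * d) :
    q ∈ convexHull ℝ R :=
  stmt_5_general d p R hR q hq0 hq1 hqmean
end

section
/- Let d ≥ 2 be an integer, p ∈ (0,1) with pd not an integer, and let j1 = ⌊pd⌋ be the largest integer less than pd. For every d-dimensional exchangeable Bernoulli vector X with marginal parameter p, the second-order cross moment μ_2 = E[X_i X_j] (i ≠ j) satisfies (1/(d(d−1)))·[−j1(j1+1) + 2·j1·pd] ≤ μ_2 ≤ p. -/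
open Finset

/-- For `d ≥ 2`, `p ∈ (0,1)` with `pd` not an integer, and any `d`-dimensional
exchangeable Bernoulli vector with marginal `p`, the cross moment `μ₂ = E[X_i X_j]` (`i ≠ j`)
satisfies `(1/(d(d−1)))(−j₁(j₁+1) + 2 j₁ pd) ≤ μ₂ ≤ p`, where `j₁ = ⌊pd⌋`. -/
theorem stmt_7 (d : ℕ) (hd : 2 ≤ d) (p : ℝ) (hp : p ∈ Set.Ioo (0 : ℝ) 1)
    (hnotint : ¬ ∃ k : ℕ, (k : ℝ) = p * d)
    (f : (Fin d → Bool) → ℝ) (hf0 : ∀ x, 0 ≤ f x) (hf1 : ∑ x, f x = 1)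
    (hexch : ∀ σ : Equiv.Perm (Fin d), ∀ x, f (x ∘ σ) = f x)
    (hmarg : ∀ i : Fin d,
      ∑ x ∈ Finset.univ.filter (fun x : Fin d → Bool => x i = true), f x = p)
    (i j : Fin d) (hij : i ≠ j)
    (μ2 : ℝ)
    (hμ2 : μ2 = ∑ x ∈ Finset.univ.filter
      (fun x : Fin d → Bool => x i = true ∧ x j = true), f x) :
    (1 / ((d : ℝ) * ((d : ℝ) - 1))) *
        (-(Nat.floor (p * d) : ℝ) * ((Nat.floor (p * d) : ℝ) + 1) +
          2 * (Nat.floor (p * d) : ℝ) * (p * d)) ≤ μ2 ∧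
      μ2 ≤ p := by
  classical
  set j1 : ℝ := (Nat.floor (p * d) : ℝ) with hj1
  have hmarg' : ∀ a : Fin d,
      ∑ x : Fin d → Bool, (if x a = true then f x else 0) = p := by
    intro a
    rw [← Finset.sum_filter]
    exact hmarg a
  have hμ2' : μ2 = ∑ x : Fin d → Bool,
      (if x i = true ∧ x j = true then f x else 0) := by
    rw [hμ2, Finset.sum_filter]
  -- all off-diagonal pair probabilities equal μ2
  have pairEq : ∀ a b : Fin d, a ≠ b →
      (∑ x : Fin d → Bool, (if x a = true ∧ x b = true then f x else 0)) = μ2 := by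
    intro a b hab
    set σ : Equiv.Perm (Fin d) :=
      (Equiv.swap i a).trans (Equiv.swap ((Equiv.swap i a) j) b) with hσ
    have hja : (Equiv.swap i a) j ≠ a := by
      intro h
      have := (Equiv.swap i a).injective (h.trans (Equiv.swap_apply_left i a).symm)
      exact hij this.symm
    have hσi : σ i = a := by
      simp only [hσ, Equiv.trans_apply, Equiv.swap_apply_left]
      exact Equiv.swap_apply_of_ne_of_ne (Ne.symm hja) hab
    have hσj : σ j = b := by
      simp only [hσ, Equiv.trans_apply, Equiv.swap_apply_left]
    rw [hμ2']
    refine Fintype.sum_equiv (σ.symm.arrowCongr (Equiv.refl Bool)) _ _ ?_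
    intro x
    have hx : (σ.symm.arrowCongr (Equiv.refl Bool)) x = x ∘ σ := by
      funext k; simp [Equiv.arrowCongr]
    rw [hx]
    simp only [Function.comp_apply, hσi, hσj, hexch σ x]
  set c : (Fin d → Bool) → ℕ :=
    fun x => (Finset.univ.filter fun k => x k = true).card with hc
  have ccast : ∀ x, (c x : ℝ) = ∑ a : Fin d, (if x a = true then (1 : ℝ) else 0) := by
    intro x
    simp [hc, Finset.sum_boole]
  have ES : ∑ x : Fin d → Bool, f x * (c x : ℝ) = d * p := by
    calc ∑ x : Fin d → Bool, f x * (c x : ℝ)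
        = ∑ x : Fin d → Bool, ∑ a : Fin d, (if x a = true then f x else 0) := by
          refine Finset.sum_congr rfl fun x _ => ?_
          rw [ccast, Finset.mul_sum]
          refine Finset.sum_congr rfl fun a _ => ?_
          split_ifs <;> simp
      _ = ∑ a : Fin d, ∑ x : Fin d → Bool, (if x a = true then f x else 0) :=
          Finset.sum_comm
      _ = ∑ _a : Fin d, p := Finset.sum_congr rfl fun a _ => hmarg' a
      _ = d * p := by
          rw [Finset.sum_const, Finset.card_univ, Fintype.card_fin, nsmul_eq_mul]
  have ES2 : ∑ x : Fin d → Bool, f x * (c x : ℝ) ^ 2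
      = (d : ℝ) * (p + ((d : ℝ) - 1) * μ2) := by
    have sq : ∀ x : Fin d → Bool, f x * (c x : ℝ) ^ 2
        = ∑ a : Fin d, ∑ b : Fin d, (if x a = true ∧ x b = true then f x else 0) := by
      intro x
      rw [ccast, pow_two, Finset.sum_mul_sum, Finset.mul_sum]
      refine Finset.sum_congr rfl fun a _ => ?_
      rw [Finset.mul_sum]
      refine Finset.sum_congr rfl fun b _ => ?_
      by_cases ha : x a = true <;> by_cases hb : x b = true <;> simp [ha, hb]
    have inner : ∀ a : Fin d, ∑ b : Fin d,
        (∑ x : Fin d → Bool, (if x a = true ∧ x b = true then f x else 0))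
        = p + ((d : ℝ) - 1) * μ2 := by
      intro a
      have step : ∀ b : Fin d,
          (∑ x : Fin d → Bool, (if x a = true ∧ x b = true then f x else 0))
          = μ2 + (if a = b then p - μ2 else 0) := by
        intro b
        by_cases hab : a = b
        · subst hab
          simp only [and_self]
          rw [hmarg' a]
          norm_num
        · rw [pairEq a b hab, if_neg hab]; ring
      rw [Finset.sum_congr rfl fun b _ => step b, Finset.sum_add_distrib,
        Finset.sum_const, Finset.sum_ite_eq]
      simp [Finset.card_univ]
      ring
    calc ∑ x : Fin d → Bool, f x * (c x : ℝ) ^ 2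
        = ∑ x : Fin d → Bool, ∑ a : Fin d, ∑ b : Fin d,
            (if x a = true ∧ x b = true then f x else 0) :=
          Finset.sum_congr rfl fun x _ => sq x
      _ = ∑ a : Fin d, ∑ x : Fin d → Bool, ∑ b : Fin d,
            (if x a = true ∧ x b = true then f x else 0) := Finset.sum_comm
      _ = ∑ a : Fin d, ∑ b : Fin d, ∑ x : Fin d → Bool,
            (if x a = true ∧ x b = true then f x else 0) :=
          Finset.sum_congr rfl fun a _ => Finset.sum_comm
      _ = ∑ _a : Fin d, (p + ((d : ℝ) - 1) * μ2) :=
          Finset.sum_congr rfl fun a _ => inner a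
      _ = (d : ℝ) * (p + ((d : ℝ) - 1) * μ2) := by
          rw [Finset.sum_const, Finset.card_univ, Fintype.card_fin, nsmul_eq_mul]
  have key : (0 : ℝ) ≤ ∑ x : Fin d → Bool,
      f x * ((c x : ℝ) - j1) * ((c x : ℝ) - j1 - 1) := by
    refine Finset.sum_nonneg fun x _ => ?_
    rcases le_or_gt (c x) (Nat.floor (p * d)) with h | h
    · have hA : (c x : ℝ) - j1 ≤ 0 := by
        rw [hj1]; have : (c x : ℝ) ≤ (Nat.floor (p * d) : ℝ) := by exact_mod_cast h
        linarith
      have hB : (c x : ℝ) - j1 - 1 ≤ 0 := by linarith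
      have hAB : (0:ℝ) ≤ ((c x : ℝ) - j1) * ((c x : ℝ) - j1 - 1) := by nlinarith
      rw [mul_assoc]
      exact mul_nonneg (hf0 x) hAB
    · have hA : (0 : ℝ) ≤ (c x : ℝ) - j1 - 1 := by
        rw [hj1]
        have : (Nat.floor (p * d) : ℝ) + 1 ≤ (c x : ℝ) := by exact_mod_cast h
        linarith
      rw [mul_assoc]
      exact mul_nonneg (hf0 x) (mul_nonneg (by linarith) hA)
  have expand : ∑ x : Fin d → Bool, f x * ((c x : ℝ) - j1) * ((c x : ℝ) - j1 - 1)
      = (∑ x : Fin d → Bool, f x * (c x : ℝ) ^ 2)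
        - (2 * j1 + 1) * (∑ x : Fin d → Bool, f x * (c x : ℝ))
        + j1 * (j1 + 1) * (∑ x : Fin d → Bool, f x) := by
    rw [Finset.mul_sum, Finset.mul_sum, ← Finset.sum_sub_distrib,
      ← Finset.sum_add_distrib]
    exact Finset.sum_congr rfl fun x _ => by ring
  rw [expand, ES, ES2, hf1] at key
  have hd2 : (2 : ℝ) ≤ (d : ℝ) := by exact_mod_cast hd
  have hD : (0 : ℝ) < (d : ℝ) * ((d : ℝ) - 1) := by nlinarith
  constructor
  · rw [one_div, inv_mul_le_iff₀ hD]
    nlinarith [key]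
  · rw [hμ2', ← hmarg' i]
    refine Finset.sum_le_sum fun x _ => ?_
    split_ifs with h1 h2
    · exact le_rfl
    · exact absurd h1.1 h2
    · exact hf0 x
    · exact le_rfl
end

section
/- Let d ≥ 2 be an integer and p ∈ (0,1) with pd an integer. For every d-dimensional exchangeable Bernoulli vector X with marginal parameter p, the second-order cross moment μ_2 = E[X_i X_j] (i ≠ j) satisfies p(pd−1)/(d−1) ≤ μ_2 ≤ p. Moreover, both bounds are attained: the lower bound by the vector whose number of defaults is almost surely pd, and the upper bound by the vector whose number of defaults equals 0 with probability 1−p and d with probability p. -/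
/-!
Let `N` be the number of defaults. Then `E[N] = dp`, and by exchangeability
`E[N(N-1)] = d(d-1) μ₂`, so `Var N ≥ 0` is exactly the lower bound; the upper bound is
`X_i X_j ≤ X_i`. For extremality, prescribe the law of `N` and spread it uniformly over each level
set `{N = n}`: `N ≡ pd` has zero variance, and `N ∈ {0, d}` forces `X_i X_j = X_i`.
-/

open Finset

/-- A joint pmf on `{0,1}^d` which is exchangeable with Bernoulli(p) margins. -/
def IsExchBernoulli (d : ℕ) (p : ℝ) (f : (Fin d → Bool) → ℝ) : Prop :=
  (∀ x, 0 ≤ f x) ∧ (∑ x, f x = 1) ∧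
  (∀ σ : Equiv.Perm (Fin d), ∀ x, f (x ∘ σ) = f x) ∧
  (∀ i : Fin d, ∑ x ∈ Finset.univ.filter (fun x : Fin d → Bool => x i = true), f x = p)

/-- The second-order cross moment `E[X_i X_j]` of the joint pmf `f`. -/
def crossMoment (d : ℕ) (f : (Fin d → Bool) → ℝ) (i j : Fin d) : ℝ :=
  ∑ x ∈ Finset.univ.filter (fun x : Fin d → Bool => x i = true ∧ x j = true), f x

/-- Probability that the number of defaults equals `k` under the joint pmf `f`. -/
def probDefaults (d : ℕ) (f : (Fin d → Bool) → ℝ) (k : ℕ) : ℝ :=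
  ∑ x ∈ Finset.univ.filter
    (fun x : Fin d → Bool => (Finset.univ.filter (fun l => x l = true)).card = k), f x

section Defaults

variable {ι : Type*} [Fintype ι]

def numDefaults (x : ι → Bool) : ℕ := #{l | x l = true}

lemma numDefaults_comp_perm (σ : Equiv.Perm ι) (x : ι → Bool) :
    numDefaults (x ∘ σ) = numDefaults x :=
  card_equiv σ fun l => by simp

variable [DecidableEq ι]

lemma exists_numDefaults_eq {n : ℕ} (hn : n ≤ Fintype.card ι) :
    ∃ x : ι → Bool, numDefaults x = n := by
  obtain ⟨t, -, rfl⟩ := exists_subset_card_eq (s := (univ : Finset ι)) hn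
  exact ⟨fun l => decide (l ∈ t), by simp [numDefaults]⟩

lemma sum_marginals (f : (ι → Bool) → ℝ) :
    ∑ i, ∑ x with x i = true, f x = ∑ x, f x * numDefaults x := by
  simp only [sum_filter]
  rw [sum_comm]
  refine sum_congr rfl fun x _ => ?_
  rw [← sum_filter, sum_const, nsmul_eq_mul, mul_comm, numDefaults]

lemma sum_offDiag_pairMoments (f : (ι → Bool) → ℝ) :
    ∑ q ∈ (univ : Finset ι).offDiag, ∑ x with x q.1 = true ∧ x q.2 = true, f x
      = ∑ x, f x * (numDefaults x * (numDefaults x - 1 : ℝ)) := by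
  simp only [sum_filter]
  rw [sum_comm]
  refine sum_congr rfl fun x _ => ?_
  have hpairs : ((univ : Finset ι).offDiag.filter fun q => x q.1 = true ∧ x q.2 = true)
      = (univ.filter fun l => x l = true).offDiag := by
    ext q; simp only [mem_filter, mem_offDiag, mem_univ, true_and]; tauto
  rw [← sum_filter, hpairs, sum_const, nsmul_eq_mul, offDiag_card,
    Nat.cast_sub (Nat.le_mul_self _), numDefaults]
  push_cast; ring

lemma sum_filter_comp_perm {f : (ι → Bool) → ℝ}
    (hf : ∀ σ : Equiv.Perm ι, ∀ x, f (x ∘ σ) = f x) (σ : Equiv.Perm ι)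
    (P : (ι → Bool) → Prop) [DecidablePred P] :
    ∑ x with P (x ∘ σ), f x = ∑ x with P x, f x := by
  rw [sum_filter, sum_filter]
  exact Fintype.sum_equiv (σ.symm.arrowCongr (Equiv.refl Bool)) _ _ fun x => by
    rw [show σ.symm.arrowCongr (Equiv.refl Bool) x = x ∘ σ from rfl, hf]

end Defaults

lemma Equiv.Perm.exists_apply_eq_and_apply_eq {ι : Type*} [DecidableEq ι] {i j i' j' : ι}
    (hij : i ≠ j) (hij' : i' ≠ j') : ∃ σ : Equiv.Perm ι, σ i = i' ∧ σ j = j' := by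
  set τ := Equiv.swap i i'
  have hτj : τ j ≠ i' := by
    rw [← Equiv.swap_apply_left i i']; exact τ.injective.ne hij.symm
  refine ⟨Equiv.swap (τ j) j' * τ, ?_, Equiv.swap_apply_left _ _⟩
  rw [Equiv.Perm.mul_apply, Equiv.swap_apply_left, Equiv.swap_apply_of_ne_of_ne hτj.symm hij']

section PermInvariant

variable {d : ℕ} {f : (Fin d → Bool) → ℝ}

lemma crossMoment_eq_of_perm_invariant (hf : ∀ σ : Equiv.Perm (Fin d), ∀ x, f (x ∘ σ) = f x)
    {i j i' j' : Fin d} (hij : i ≠ j) (hij' : i' ≠ j') :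
    crossMoment d f i j = crossMoment d f i' j' := by
  obtain ⟨σ, rfl, rfl⟩ := Equiv.Perm.exists_apply_eq_and_apply_eq hij' hij
  simpa [crossMoment] using sum_filter_comp_perm hf σ fun x => x i' = true ∧ x j' = true

lemma mul_crossMoment_of_perm_invariant
    (hf : ∀ σ : Equiv.Perm (Fin d), ∀ x, f (x ∘ σ) = f x) {i j : Fin d} (hij : i ≠ j) :
    (d : ℝ) * (d - 1) * crossMoment d f i j
      = ∑ x, f x * (numDefaults x * (numDefaults x - 1 : ℝ)) := by
  have hpair : ∀ q ∈ (univ : Finset (Fin d)).offDiag,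
      ∑ x with x q.1 = true ∧ x q.2 = true, f x = crossMoment d f i j :=
    fun q hq => crossMoment_eq_of_perm_invariant hf (mem_offDiag.1 hq).2.2 hij
  rw [← sum_offDiag_pairMoments, sum_congr rfl hpair, sum_const, offDiag_card,
    card_univ, Fintype.card_fin, nsmul_eq_mul, Nat.cast_sub (Nat.le_mul_self _)]
  push_cast; ring

lemma mul_marginal_of_perm_invariant (hf : ∀ σ : Equiv.Perm (Fin d), ∀ x, f (x ∘ σ) = f x)
    (i : Fin d) :
    (d : ℝ) * ∑ x with x i = true, f x = ∑ x, f x * numDefaults x := by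
  have hmarginal (j : Fin d) : ∑ x with x j = true, f x = ∑ x with x i = true, f x := by
    simpa using sum_filter_comp_perm hf (Equiv.swap i j) fun x => x i = true
  rw [← sum_marginals, sum_congr rfl fun j _ => hmarginal j, sum_const, card_univ,
    Fintype.card_fin, nsmul_eq_mul]

end PermInvariant

lemma Fin.one_lt_cast_of_ne {d : ℕ} {i j : Fin d} (hij : i ≠ j) : (1 : ℝ) < d := by
  exact_mod_cast Fintype.card_fin d ▸ Fintype.one_lt_card_iff.2 ⟨i, j, hij⟩

lemma sq_sum_mul_le_sum_mul_sq {α : Type*} {s : Finset α} {w g : α → ℝ}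
    (hw : ∀ a ∈ s, 0 ≤ w a) (hw1 : ∑ a ∈ s, w a = 1) :
    (∑ a ∈ s, w a * g a) ^ 2 ≤ ∑ a ∈ s, w a * g a ^ 2 := by
  simpa [hw1] using sum_sq_le_sum_mul_sum_of_sq_le_mul s hw
    (fun a ha => mul_nonneg (hw a ha) (sq_nonneg (g a))) (fun a _ => (by ring : _ = _).le)

namespace IsExchBernoulli

variable {d : ℕ} {p : ℝ} {f : (Fin d → Bool) → ℝ}

lemma sum_mul_numDefaults (hf : IsExchBernoulli d p f) :
    ∑ x, f x * numDefaults x = p * d := by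
  rw [← sum_marginals, sum_congr rfl fun i _ => hf.2.2.2 i, sum_const, card_univ,
    Fintype.card_fin, nsmul_eq_mul, mul_comm]

lemma crossMoment_le (hf : IsExchBernoulli d p f) (i j : Fin d) : crossMoment d f i j ≤ p :=
  calc crossMoment d f i j ≤ ∑ x with x i = true, f x :=
        sum_le_sum_of_subset_of_nonneg (monotone_filter_right _ fun _ _ h => h.1)
          fun x _ _ => hf.1 x
    _ = p := hf.2.2.2 i

lemma le_crossMoment (hf : IsExchBernoulli d p f) {i j : Fin d} (hij : i ≠ j) :
    p * (p * d - 1) / (d - 1) ≤ crossMoment d f i j := by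
  have hd : (1 : ℝ) < d := Fin.one_lt_cast_of_ne hij
  have hvar : (p * d) ^ 2 ≤ ∑ x, f x * (numDefaults x : ℝ) ^ 2 :=
    hf.sum_mul_numDefaults ▸ sq_sum_mul_le_sum_mul_sq (fun x _ => hf.1 x) hf.2.1
  have hsecond : ∑ x, f x * (numDefaults x : ℝ) ^ 2
      = d * (d - 1) * crossMoment d f i j + p * d := by
    rw [mul_crossMoment_of_perm_invariant hf.2.2.1 hij, ← hf.sum_mul_numDefaults,
      ← sum_add_distrib]
    exact sum_congr rfl fun x _ => by ring
  rw [div_le_iff₀ (by linarith)]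
  nlinarith

end IsExchBernoulli

section OfNumDefaultsLaw

variable {ι : Type*} [Fintype ι] [DecidableEq ι]

noncomputable def ofNumDefaultsLaw (w : ℕ → ℝ) (x : ι → Bool) : ℝ :=
  w (numDefaults x) / #{y : ι → Bool | numDefaults y = numDefaults x}

lemma ofNumDefaultsLaw_comp_perm (w : ℕ → ℝ) (σ : Equiv.Perm ι) (x : ι → Bool) :
    ofNumDefaultsLaw w (x ∘ σ) = ofNumDefaultsLaw w x := by
  simp only [ofNumDefaultsLaw, numDefaults_comp_perm]

lemma ofNumDefaultsLaw_nonneg {w : ℕ → ℝ} (hw : ∀ n, 0 ≤ w n) (x : ι → Bool) :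
    0 ≤ ofNumDefaultsLaw w x :=
  div_nonneg (hw _) (Nat.cast_nonneg _)

lemma sum_ofNumDefaultsLaw_mul (w h : ℕ → ℝ) :
    ∑ x : ι → Bool, ofNumDefaultsLaw w x * h (numDefaults x)
      = ∑ n ∈ range (Fintype.card ι + 1), w n * h n := by
  have hmaps : ∀ x ∈ (univ : Finset (ι → Bool)),
      numDefaults x ∈ range (Fintype.card ι + 1) :=
    fun x _ => mem_range_succ_iff.2 (card_le_univ _)
  refine (sum_fiberwise_of_maps_to' hmaps
    fun n => w n / #{y : ι → Bool | numDefaults y = n} * h n).symm.trans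
    (sum_congr rfl fun n hn => ?_)
  obtain ⟨x, hx⟩ := exists_numDefaults_eq (mem_range_succ_iff.1 hn)
  have hlevel : (#{y : ι → Bool | numDefaults y = n} : ℝ) ≠ 0 :=
    Nat.cast_ne_zero.2 (card_ne_zero_of_mem (mem_filter.2 ⟨mem_univ x, hx⟩))
  rw [sum_const, nsmul_eq_mul]
  field_simp

end OfNumDefaultsLaw

section OfNumDefaultsLawFin

variable {d : ℕ} {w : ℕ → ℝ}

lemma probDefaults_ofNumDefaultsLaw {n : ℕ} (hn : n ≤ d) :
    probDefaults d (ofNumDefaultsLaw w) n = w n := by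
  have h := sum_ofNumDefaultsLaw_mul (ι := Fin d) w fun m => if m = n then 1 else 0
  simp only [mul_ite, mul_one, mul_zero] at h
  rwa [Fintype.card_fin, sum_ite_eq', if_pos (mem_range_succ_iff.2 hn), ← sum_filter] at h

lemma isExchBernoulli_ofNumDefaultsLaw {p : ℝ} (hw : ∀ n, 0 ≤ w n)
    (hw1 : ∑ n ∈ range (d + 1), w n = 1) (hmean : ∑ n ∈ range (d + 1), w n * n = p * d) :
    IsExchBernoulli d p (ofNumDefaultsLaw w) := by
  refine ⟨ofNumDefaultsLaw_nonneg hw, ?_, ofNumDefaultsLaw_comp_perm w, fun i => ?_⟩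
  · simpa [hw1] using sum_ofNumDefaultsLaw_mul (ι := Fin d) w fun _ => 1
  · have hd : (d : ℝ) ≠ 0 := Nat.cast_ne_zero.2 (Fin.pos i).ne'
    have := mul_marginal_of_perm_invariant (ofNumDefaultsLaw_comp_perm w) i
    rw [sum_ofNumDefaultsLaw_mul (h := fun n => (n : ℝ)), Fintype.card_fin, hmean] at this
    exact mul_left_cancel₀ hd (this.trans (mul_comm p d))

lemma crossMoment_ofNumDefaultsLaw {i j : Fin d} (hij : i ≠ j) :
    (d : ℝ) * (d - 1) * crossMoment d (ofNumDefaultsLaw w) i j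
      = ∑ n ∈ range (d + 1), w n * (n * (n - 1)) := by
  rw [mul_crossMoment_of_perm_invariant (ofNumDefaultsLaw_comp_perm w) hij,
    sum_ofNumDefaultsLaw_mul (h := fun n => (n : ℝ) * (n - 1)), Fintype.card_fin]

end OfNumDefaultsLawFin

section Extremal

variable {d : ℕ} {p : ℝ}

lemma exists_isExchBernoulli_numDefaults_eq {k : ℕ} (hkd : k ≤ d) (hk : (k : ℝ) = p * d) :
    ∃ f, IsExchBernoulli d p f ∧ probDefaults d f k = 1 ∧
      ∀ i j : Fin d, i ≠ j → crossMoment d f i j = p * (p * d - 1) / (d - 1) := by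
  set w : ℕ → ℝ := fun n => if n = k then 1 else 0
  have hsum (h : ℕ → ℝ) : ∑ n ∈ range (d + 1), w n * h n = h k := by
    simp [w, mem_range_succ_iff.2 hkd]
  refine ⟨ofNumDefaultsLaw w, isExchBernoulli_ofNumDefaultsLaw (fun n => by positivity)
    (by simpa using hsum 1) (by simpa [hk] using hsum fun n => n),
    by simp [w, probDefaults_ofNumDefaultsLaw hkd], fun i j hij => ?_⟩
  have hd : (1 : ℝ) < d := Fin.one_lt_cast_of_ne hij
  have := crossMoment_ofNumDefaultsLaw (w := w) hij
  rw [hsum, hk] at this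
  rw [eq_div_iff (by linarith)]
  have hd0 : (d : ℝ) ≠ 0 := by positivity
  apply mul_left_cancel₀ hd0
  linear_combination this

lemma exists_isExchBernoulli_numDefaults_zero_or_all (hd : 0 < d) (hp : p ∈ Set.Icc (0 : ℝ) 1) :
    ∃ f, IsExchBernoulli d p f ∧ probDefaults d f 0 = 1 - p ∧ probDefaults d f d = p ∧
      ∀ i j : Fin d, i ≠ j → crossMoment d f i j = p := by
  set w : ℕ → ℝ := fun n => (1 - p) * (if n = 0 then 1 else 0) + p * (if n = d then 1 else 0)
  have hsum (h : ℕ → ℝ) : ∑ n ∈ range (d + 1), w n * h n = (1 - p) * h 0 + p * h d := by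
    simp [w, add_mul, sum_add_distrib]
  refine ⟨ofNumDefaultsLaw w, isExchBernoulli_ofNumDefaultsLaw (fun n => ?_)
    (by simpa using hsum 1) (by simpa using hsum fun n => n), ?_, ?_, fun i j hij => ?_⟩
  · exact add_nonneg (mul_nonneg (sub_nonneg.2 hp.2) (by positivity))
      (mul_nonneg hp.1 (by positivity))
  · simp [w, probDefaults_ofNumDefaultsLaw (Nat.zero_le d), hd.ne]
  · simp [w, probDefaults_ofNumDefaultsLaw le_rfl, hd.ne']
  · have hd1 : (1 : ℝ) < d := Fin.one_lt_cast_of_ne hij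
    have := crossMoment_ofNumDefaultsLaw (w := w) hij
    rw [hsum] at this
    have hdd : (d : ℝ) * (d - 1) ≠ 0 := by nlinarith
    apply mul_left_cancel₀ hdd
    linear_combination this

end Extremal

/-- For `d ≥ 2`, `p ∈ (0,1)` with `pd` an integer, every exchangeable Bernoulli
vector with marginal `p` has cross moment `μ₂` in `[p(pd−1)/(d−1), p]`; the lower bound is
attained by the vector whose number of defaults is a.s. `pd`, and the upper bound by the vector
whose number of defaults is `0` with probability `1−p` and `d` with probability `p`. -/
theorem stmt_8 (d : ℕ) (hd : 2 ≤ d) (p : ℝ) (hp : p ∈ Set.Ioo (0 : ℝ) 1)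
    (k : ℕ) (hk : (k : ℝ) = p * d) :
    (∀ f : (Fin d → Bool) → ℝ, IsExchBernoulli d p f →
      ∀ i j : Fin d, i ≠ j →
        p * (p * d - 1) / ((d : ℝ) - 1) ≤ crossMoment d f i j ∧ crossMoment d f i j ≤ p) ∧
    (∃ f : (Fin d → Bool) → ℝ, IsExchBernoulli d p f ∧
      probDefaults d f k = 1 ∧
      ∀ i j : Fin d, i ≠ j → crossMoment d f i j = p * (p * d - 1) / ((d : ℝ) - 1)) ∧
    (∃ f : (Fin d → Bool) → ℝ, IsExchBernoulli d p f ∧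
      probDefaults d f 0 = 1 - p ∧ probDefaults d f d = p ∧
      ∀ i j : Fin d, i ≠ j → crossMoment d f i j = p) := by
  obtain ⟨hp0, hp1⟩ := hp
  have hkd : k ≤ d := by
    exact_mod_cast hk ▸ mul_le_of_le_one_left (Nat.cast_nonneg d) hp1.le
  exact ⟨fun f hf i j hij => ⟨hf.le_crossMoment hij, hf.crossMoment_le i j⟩,
    exists_isExchBernoulli_numDefaults_eq hkd hk,
    exists_isExchBernoulli_numDefaults_zero_or_all (by omega) ⟨hp0.le, hp1.le⟩⟩
end

section
/- Let d ≥ 2 be an integer and p ∈ (0,1), and let X be a d-dimensional exchangeable Bernoulli vector with marginal parameter p. Let ρ = (E[X_i X_j] − p²)/(p(1−p)) for i ≠ j be the common pairwise correlation. If pd is not an integer, then, with j1 = ⌊pd⌋, ((1/(d(d−1)))·[−j1(j1+1) + 2·j1·pd] − p²)/(p(1−p)) ≤ ρ ≤ 1. If pd is an integer, then −1/(d−1) ≤ ρ ≤ 1. -/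
/-!
Let `S = X_1 + ⋯ + X_d`. Then `E[S] = pd`, and by exchangeability
`E[S(S - 1)] = d(d - 1) E[X_i X_j]`. Since `S` is integer-valued, `S(S - 1)` lies above the chord
`2JS - J(J + 1)` of `s ↦ s(s - 1)` through `J` and `J + 1` for every integer `J`; taking expectations
gives `d(d - 1) E[X_i X_j] ≥ 2Jpd - J(J + 1)`, and `J = ⌊pd⌋` yields the lower bound, which equals
`-1/(d - 1)` when `pd` is an integer. The upper bound is `E[X_i X_j] ≤ E[X_i] = p`.
-/

open Finset

theorem exists_perm_apply_eq_apply_eq {ι : Type*} [DecidableEq ι] {i j a b : ι} (hij : i ≠ j)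
    (hab : a ≠ b) : ∃ σ : Equiv.Perm ι, σ i = a ∧ σ j = b := by
  set τ := Equiv.swap i a
  have hτj : τ j ≠ a := by
    rw [← Equiv.swap_apply_left i a]
    exact τ.injective.ne hij.symm
  refine ⟨Equiv.swap (τ j) b * τ, ?_, ?_⟩
  · simp only [Equiv.Perm.mul_apply, τ, Equiv.swap_apply_left]
    exact Equiv.swap_apply_of_ne_of_ne hτj.symm hab
  · simp only [Equiv.Perm.mul_apply, Equiv.swap_apply_left]

theorem chord_le_sq_sub_self (s J : ℕ) :
    2 * (J : ℝ) * s - J * (J + 1) ≤ (s : ℝ) ^ 2 - s := by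
  have : 0 ≤ ((s : ℝ) - J) * ((s : ℝ) - J - 1) := by
    rcases le_or_gt s J with h | h
    · have : (s : ℝ) ≤ J := by exact_mod_cast h
      nlinarith
    · have : (J : ℝ) + 1 ≤ s := by exact_mod_cast h
      nlinarith
  nlinarith

section ExchangeableBernoulli

variable {ι : Type*} [Fintype ι]

def numTrue (x : ι → Bool) : ℕ := #{a | x a = true}

theorem numTrue_sq_sub_self (x : ι → Bool) :
    (numTrue x : ℝ) ^ 2 - numTrue x =
      #{q ∈ (univ : Finset ι).offDiag | x q.1 = true ∧ x q.2 = true} := by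
  have hfilter : {q ∈ (univ : Finset ι).offDiag | x q.1 = true ∧ x q.2 = true} =
      ({a | x a = true} : Finset ι).offDiag := by
    ext q
    simp only [mem_filter, mem_offDiag, mem_univ, true_and]
    tauto
  rw [hfilter, offDiag_card, Nat.cast_sub (Nat.le_mul_self _), numTrue]
  push_cast
  ring

variable [DecidableEq ι]

theorem sum_numTrue_mul (f : (ι → Bool) → ℝ) :
    ∑ x, (numTrue x : ℝ) * f x = ∑ a, ∑ x with x a = true, f x := by
  simp_rw [numTrue, card_filter, Nat.cast_sum, sum_mul, Nat.cast_ite, Nat.cast_one,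
    Nat.cast_zero, ite_mul, one_mul, zero_mul, sum_filter]
  exact sum_comm

theorem sum_numTrue_sq_sub_self_mul (f : (ι → Bool) → ℝ) :
    ∑ x, ((numTrue x : ℝ) ^ 2 - numTrue x) * f x =
      ∑ q ∈ univ.offDiag, ∑ x with x q.1 = true ∧ x q.2 = true, f x := by
  simp_rw [numTrue_sq_sub_self, card_filter, Nat.cast_sum, sum_mul, Nat.cast_ite, Nat.cast_one,
    Nat.cast_zero, ite_mul, one_mul, zero_mul, sum_filter]
  exact sum_comm

variable {f : (ι → Bool) → ℝ}

theorem sum_filter_pair_eq_of_perm_invariant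
    (hexch : ∀ σ : Equiv.Perm ι, ∀ x, f (x ∘ σ) = f x) {i j a b : ι} (hij : i ≠ j)
    (hab : a ≠ b) :
    ∑ x with x a = true ∧ x b = true, f x = ∑ x with x i = true ∧ x j = true, f x := by
  obtain ⟨σ, hσi, hσj⟩ := exists_perm_apply_eq_apply_eq hij hab
  rw [sum_filter, sum_filter]
  refine Fintype.sum_equiv (σ.symm.arrowCongr (Equiv.refl Bool)) _ _ fun x => ?_
  -- `σ.symm.arrowCongr (Equiv.refl Bool)` is `x ↦ x ∘ σ`
  change _ = if (x ∘ σ) i = true ∧ (x ∘ σ) j = true then f (x ∘ σ) else 0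
  simp [hσi, hσj, hexch]

theorem chord_le_card_mul_sum_filter_pair (hf0 : ∀ x, 0 ≤ f x) (hf1 : ∑ x, f x = 1)
    (hexch : ∀ σ : Equiv.Perm ι, ∀ x, f (x ∘ σ) = f x) {p : ℝ}
    (hmarg : ∀ a, ∑ x with x a = true, f x = p) {i j : ι} (hij : i ≠ j) (J : ℕ) :
    2 * J * (Fintype.card ι * p) - J * (J + 1) ≤
      Fintype.card ι * (Fintype.card ι - 1) * ∑ x with x i = true ∧ x j = true, f x := by
  have hmean : ∑ x, (numTrue x : ℝ) * f x = Fintype.card ι * p := by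
    simp [sum_numTrue_mul, hmarg]
  have hfactorial : ∑ x, ((numTrue x : ℝ) ^ 2 - numTrue x) * f x =
      Fintype.card ι * (Fintype.card ι - 1) * ∑ x with x i = true ∧ x j = true, f x := by
    rw [sum_numTrue_sq_sub_self_mul, sum_congr rfl fun q hq =>
      sum_filter_pair_eq_of_perm_invariant hexch hij (mem_offDiag.mp hq).2.2, sum_const,
      offDiag_card, card_univ, nsmul_eq_mul, Nat.cast_sub (Nat.le_mul_self _)]
    push_cast
    ring
  calc 2 * J * (Fintype.card ι * p) - J * (J + 1)
      = ∑ x, (2 * (J : ℝ) * numTrue x - J * (J + 1)) * f x := by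
        simp_rw [sub_mul, sum_sub_distrib, mul_assoc, ← mul_sum, hmean, hf1, mul_one]
    _ ≤ ∑ x, ((numTrue x : ℝ) ^ 2 - numTrue x) * f x :=
        sum_le_sum fun x _ => mul_le_mul_of_nonneg_right (chord_le_sq_sub_self _ J) (hf0 x)
    _ = _ := hfactorial

end ExchangeableBernoulli

/-- For `d ≥ 2`, `p ∈ (0,1)` and an exchangeable Bernoulli vector with marginal
`p`, the common pairwise correlation `ρ = (E[X_i X_j] − p²)/(p(1−p))` satisfies
`((1/(d(d−1)))(−j₁(j₁+1) + 2 j₁ pd) − p²)/(p(1−p)) ≤ ρ ≤ 1` when `pd` is not an integer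
(with `j₁ = ⌊pd⌋`), and `−1/(d−1) ≤ ρ ≤ 1` when `pd` is an integer. -/
theorem stmt_9 (d : ℕ) (hd : 2 ≤ d) (p : ℝ) (hp : p ∈ Set.Ioo (0 : ℝ) 1)
    (f : (Fin d → Bool) → ℝ) (hf0 : ∀ x, 0 ≤ f x) (hf1 : ∑ x, f x = 1)
    (hexch : ∀ σ : Equiv.Perm (Fin d), ∀ x, f (x ∘ σ) = f x)
    (hmarg : ∀ i : Fin d,
      ∑ x ∈ Finset.univ.filter (fun x : Fin d → Bool => x i = true), f x = p)
    (i j : Fin d) (hij : i ≠ j)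
    (ρ : ℝ)
    (hρ : ρ = ((∑ x ∈ Finset.univ.filter
        (fun x : Fin d → Bool => x i = true ∧ x j = true), f x) - p ^ 2) / (p * (1 - p))) :
    ((¬ ∃ k : ℕ, (k : ℝ) = p * d) →
      ((1 / ((d : ℝ) * ((d : ℝ) - 1))) *
          (-(Nat.floor (p * d) : ℝ) * ((Nat.floor (p * d) : ℝ) + 1) +
            2 * (Nat.floor (p * d) : ℝ) * (p * d)) - p ^ 2) / (p * (1 - p)) ≤ ρ ∧ ρ ≤ 1) ∧
    ((∃ k : ℕ, (k : ℝ) = p * d) →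
      -(1 / ((d : ℝ) - 1)) ≤ ρ ∧ ρ ≤ 1) := by
  obtain ⟨hp0, hp1⟩ := hp
  have hpq : 0 < p * (1 - p) := mul_pos hp0 (sub_pos.mpr hp1)
  have hd1 : (1 : ℝ) < d := by exact_mod_cast hd
  set m := ∑ x with x i = true ∧ x j = true, f x
  have hm_le : m ≤ p := hmarg i ▸
    sum_le_sum_of_subset_of_nonneg (monotone_filter_right _ fun x _ hx => hx.1)
      fun x _ _ => hf0 x
  have hρ_le : ρ ≤ 1 := by
    rw [hρ, div_le_one hpq]
    nlinarith
  have hchord : ∀ J : ℕ, ((1 / ((d : ℝ) * ((d : ℝ) - 1))) * (-(J : ℝ) * (J + 1) + 2 * J * (p * d))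
      - p ^ 2) / (p * (1 - p)) ≤ ρ := by
    intro J
    have hbound := chord_le_card_mul_sum_filter_pair hf0 hf1 hexch hmarg hij J
    rw [Fintype.card_fin] at hbound
    rw [hρ]
    gcongr
    rw [one_div_mul_eq_div, div_le_iff₀ (by nlinarith)]
    linarith
  refine ⟨fun _ => ⟨hchord _, hρ_le⟩, fun ⟨k, hk⟩ => ⟨?_, hρ_le⟩⟩
  convert hchord k using 1
  have hd1' : (d : ℝ) - 1 ≠ 0 := (sub_pos.mpr hd1).ne'
  rw [hk]
  field_simp
  ring
end

section
/- Let d ≥ 2 be an integer, p ∈ (0,1) and μ_2 ∈ ℝ, and let D(p, μ_2) be the convex set of pmfs q on {0,…,d} satisfying Σ_{j=0}^d j·q(j) = pd and Σ_{j=0}^d j²·q(j) = pd + d(d−1)·μ_2. Then every extreme point of D(p, μ_2) has support on at most three points, i.e. at most three of its values q(0),…,q(d) are nonzero. -/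
/-!
If `q` is an extreme point of `{q ≥ 0 | A q = c}`, the columns of `A` indexed by the support of
`q` are linearly independent: a kernel vector `w` supported there keeps `q ± ε w` feasible for
small `ε > 0`, exhibiting `q` as a midpoint. Hence the support has at most as many points as there
are constraints, and `D(p, μ₂)` is cut out by three of them, the moments of order 0, 1, 2.
-/

open Finset Filter Topology Matrix

section StandardPolyhedron

variable {ι m : Type*} [Fintype ι] (A : Matrix m ι ℝ) (c : m → ℝ)

def standardPolyhedron : Set (ι → ℝ) := {q | (∀ j, 0 ≤ q j) ∧ A *ᵥ q = c}

variable {A c}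

lemma exists_pos_forall_nonneg_add_mul_and_sub_mul {q w : ι → ℝ} (hq : ∀ j, 0 ≤ q j)
    (hw : ∀ j, q j = 0 → w j = 0) :
    ∃ ε > 0, ∀ j, 0 ≤ q j + ε * w j ∧ 0 ≤ q j - ε * w j := by
  have hnear : ∀ᶠ t in 𝓝 (0 : ℝ), ∀ j, 0 ≤ q j + t * w j ∧ 0 ≤ q j - t * w j := by
    refine eventually_all.2 fun j => ?_
    rcases (hq j).eq_or_lt with hqj | hqj
    · simp [← hqj, hw j hqj.symm]
    · have hplus : ∀ᶠ t in 𝓝 (0 : ℝ), 0 < q j + t * w j :=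
        continuousAt_const.eventually_lt (by fun_prop) (by simpa using hqj)
      have hminus : ∀ᶠ t in 𝓝 (0 : ℝ), 0 < q j - t * w j :=
        continuousAt_const.eventually_lt (by fun_prop) (by simpa using hqj)
      exact (hplus.and hminus).mono fun t ht => ⟨ht.1.le, ht.2.le⟩
  obtain ⟨ε, hεnonneg, hε⟩ :=
    ((hnear.filter_mono nhdsWithin_le_nhds).and (self_mem_nhdsWithin (s := Set.Ioi 0))).exists
  exact ⟨ε, hε, hεnonneg⟩

lemma eq_zero_of_mem_extremePoints_standardPolyhedron {q w : ι → ℝ}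
    (hq : q ∈ (standardPolyhedron A c).extremePoints ℝ) (hAw : A *ᵥ w = 0)
    (hw : ∀ j, q j = 0 → w j = 0) : w = 0 := by
  obtain ⟨⟨hq0, hAq⟩, hqext⟩ := hq
  obtain ⟨ε, hε, hnonneg⟩ := exists_pos_forall_nonneg_add_mul_and_sub_mul hq0 hw
  have hplus : q + ε • w ∈ standardPolyhedron A c :=
    ⟨fun j => by simpa using (hnonneg j).1, by simp [mulVec_add, mulVec_smul, hAq, hAw]⟩
  have hminus : q - ε • w ∈ standardPolyhedron A c :=
    ⟨fun j => by simpa using (hnonneg j).2, by simp [mulVec_sub, mulVec_smul, hAq, hAw]⟩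
  have hmid : q ∈ openSegment ℝ (q + ε • w) (q - ε • w) :=
    ⟨1 / 2, 1 / 2, by norm_num, by norm_num, by norm_num, by module⟩
  simpa [hε.ne'] using hqext hplus hminus hmid

lemma linearIndependent_col_of_mem_extremePoints_standardPolyhedron {q : ι → ℝ}
    (hq : q ∈ (standardPolyhedron A c).extremePoints ℝ) :
    LinearIndependent ℝ (fun j : {j // q j ≠ 0} => Aᵀ j) := by
  classical
  refine Fintype.linearIndependent_iff.2 fun g hg => ?_
  set w : ι → ℝ := Function.extend Subtype.val g 0
  have hw_val : ∀ j : {j // q j ≠ 0}, w j = g j := Subtype.val_injective.extend_apply g 0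
  have hw_zero : ∀ j, q j = 0 → w j = 0 := fun j hj =>
    Function.extend_apply' _ _ _ fun ⟨k, hk⟩ => k.2 (hk ▸ hj)
  have hAw : A *ᵥ w = 0 := by
    ext i
    have hgi := congrFun hg i
    simp only [Finset.sum_apply, Pi.smul_apply, transpose_apply, smul_eq_mul] at hgi
    have hoff : ∑ j : {j // ¬q j ≠ 0}, A i j * w j = 0 :=
      Finset.sum_eq_zero fun j _ => by rw [hw_zero j (not_not.1 j.2), mul_zero]
    rw [mulVec, dotProduct, ← Fintype.sum_subtype_add_sum_subtype (fun j => q j ≠ 0), hoff]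
    simpa [hw_val, mul_comm] using hgi
  intro j
  rw [← hw_val, eq_zero_of_mem_extremePoints_standardPolyhedron hq hAw hw_zero, Pi.zero_apply]

lemma card_support_le_of_mem_extremePoints_standardPolyhedron [Fintype m] {q : ι → ℝ}
    (hq : q ∈ (standardPolyhedron A c).extremePoints ℝ) :
    #{j | q j ≠ 0} ≤ Fintype.card m := by
  classical
  have hcard :=
    (linearIndependent_col_of_mem_extremePoints_standardPolyhedron hq).fintype_card_le_finrank
  rwa [Module.finrank_fintype_fun_eq_card, Fintype.card_subtype] at hcard

end StandardPolyhedron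

theorem stmt_10_general (d : ℕ) (p : ℝ) (μ2 : ℝ)
    (D : Set (Fin (d + 1) → ℝ))
    (hD : D = {q : Fin (d + 1) → ℝ |
      (∀ j, 0 ≤ q j) ∧ (∑ j, q j = 1) ∧
      (∑ j, (j.val : ℝ) * q j = p * d) ∧
      (∑ j, (j.val : ℝ) ^ 2 * q j = p * d + (d : ℝ) * ((d : ℝ) - 1) * μ2)})
    (q : Fin (d + 1) → ℝ) (hq : q ∈ Set.extremePoints ℝ D) :
    (Finset.univ.filter (fun j => q j ≠ 0)).card ≤ 3 := by
  have hDstd : D = standardPolyhedron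
      (Matrix.of ![fun _ => 1, fun j => (j.val : ℝ), fun j => (j.val : ℝ) ^ 2])
      ![1, p * d, p * d + (d : ℝ) * ((d : ℝ) - 1) * μ2] := by
    ext q
    simp [hD, standardPolyhedron, funext_iff, Fin.forall_fin_succ, dotProduct]
  rw [hDstd] at hq
  simpa using card_support_le_of_mem_extremePoints_standardPolyhedron hq

/-- Every extreme point of the convex set of pmfs on `{0,…,d}` with mean `pd`
and second moment `pd + d(d−1)μ₂` has at most three nonzero values. -/
theorem stmt_10 (d : ℕ) (hd : 2 ≤ d) (p : ℝ) (hp : p ∈ Set.Ioo (0 : ℝ) 1) (μ2 : ℝ)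
    (D : Set (Fin (d + 1) → ℝ))
    (hD : D = {q : Fin (d + 1) → ℝ |
      (∀ j, 0 ≤ q j) ∧ (∑ j, q j = 1) ∧
      (∑ j, (j.val : ℝ) * q j = p * d) ∧
      (∑ j, (j.val : ℝ) ^ 2 * q j = p * d + (d : ℝ) * ((d : ℝ) - 1) * μ2)})
    (q : Fin (d + 1) → ℝ) (hq : q ∈ Set.extremePoints ℝ D) :
    (Finset.univ.filter (fun j => q j ≠ 0)).card ≤ 3 :=
  stmt_10_general d p μ2 D hD q hq
end

section
/- Let d ≥ 2 be an integer, p ∈ (0,1), μ_2 ∈ ℝ, and let 0 ≤ i < j < k ≤ d be integers. If q is a pmf on {0,…,d} supported in {i,j,k} (i.e. q(l) = 0 for l ∉ {i,j,k}) with Σ_{l=0}^d l·q(l) = pd and Σ_{l=0}^d l²·q(l) = pd + d(d−1)·μ_2, then necessarily q(i) = (jk − (j+k−1)dp + d(d−1)μ_2)/((k−i)(j−i)), q(j) = −(ik − (i+k−1)dp + d(d−1)μ_2)/((k−j)(j−i)), and q(k) = (ij − (i+j−1)dp + d(d−1)μ_2)/((k−j)(k−i)). Conversely, if these three quantities are all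 nonnegative, the pmf defined by them (and zero elsewhere) satisfies both moment constraints. -/
open Finset

lemma sum3_aux {d i j k : ℕ} (hij : i < j) (hjk : j < k) (hkd : k ≤ d)
    (g : Fin (d + 1) → ℝ)
    (h0 : ∀ l : Fin (d + 1), l.val ≠ i → l.val ≠ j → l.val ≠ k → g l = 0) :
    ∑ l, g l = g ⟨i, by omega⟩ + g ⟨j, by omega⟩ + g ⟨k, by omega⟩ := by
  set I : Fin (d+1) := ⟨i, by omega⟩
  set J : Fin (d+1) := ⟨j, by omega⟩
  set K : Fin (d+1) := ⟨k, by omega⟩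
  have hs : ∑ l, g l = ∑ l ∈ ({I, J, K} : Finset (Fin (d+1))), g l := by
    refine (Finset.sum_subset (Finset.subset_univ _) ?_).symm
    intro x _ hx
    simp only [Finset.mem_insert, Finset.mem_singleton, not_or] at hx
    exact h0 x (fun h => hx.1 (Fin.ext h)) (fun h => hx.2.1 (Fin.ext h))
      (fun h => hx.2.2 (Fin.ext h))
  rw [hs]
  rw [Finset.sum_insert (by simp [I, J, K, Fin.ext_iff]; omega),
    Finset.sum_insert (by simp [J, K, Fin.ext_iff]; omega), Finset.sum_singleton]
  ring

/-- For `0 ≤ i < j < k ≤ d`, a pmf on `{0,…,d}` supported in `{i,j,k}` with mean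
`pd` and second moment `pd + d(d−1)μ₂` necessarily takes the explicit values `q(i), q(j), q(k)`
given by Cramer's formulas; conversely, if those three quantities are nonnegative, the function
defined by them (and zero elsewhere) is a pmf satisfying both moment constraints. -/
theorem stmt_11 (d : ℕ) (hd : 2 ≤ d) (p : ℝ) (hp : p ∈ Set.Ioo (0 : ℝ) 1) (μ2 : ℝ)
    (i j k : ℕ) (hij : i < j) (hjk : j < k) (hkd : k ≤ d)
    (qi qj qk : ℝ)
    (hqi : qi = ((j : ℝ) * k - ((j : ℝ) + k - 1) * (d * p) + (d : ℝ) * ((d : ℝ) - 1) * μ2) /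
      (((k : ℝ) - i) * ((j : ℝ) - i)))
    (hqj : qj = -(((i : ℝ) * k - ((i : ℝ) + k - 1) * (d * p) + (d : ℝ) * ((d : ℝ) - 1) * μ2) /
      (((k : ℝ) - j) * ((j : ℝ) - i))))
    (hqk : qk = ((i : ℝ) * j - ((i : ℝ) + j - 1) * (d * p) + (d : ℝ) * ((d : ℝ) - 1) * μ2) /
      (((k : ℝ) - j) * ((k : ℝ) - i))) :
    (∀ q : Fin (d + 1) → ℝ,
      (∀ l, 0 ≤ q l) → (∑ l, q l = 1) →
      (∀ l : Fin (d + 1), l.val ≠ i → l.val ≠ j → l.val ≠ k → q l = 0) →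
      (∑ l, (l.val : ℝ) * q l = p * d) →
      (∑ l, (l.val : ℝ) ^ 2 * q l = p * d + (d : ℝ) * ((d : ℝ) - 1) * μ2) →
      ∀ l : Fin (d + 1),
        (l.val = i → q l = qi) ∧ (l.val = j → q l = qj) ∧ (l.val = k → q l = qk)) ∧
    (0 ≤ qi → 0 ≤ qj → 0 ≤ qk →
      ∀ q : Fin (d + 1) → ℝ,
        q = (fun l : Fin (d + 1) =>
          if l.val = i then qi else if l.val = j then qj else if l.val = k then qk else 0) →
        (∀ l, 0 ≤ q l) ∧ (∑ l, q l = 1) ∧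
        (∑ l, (l.val : ℝ) * q l = p * d) ∧
        (∑ l, (l.val : ℝ) ^ 2 * q l = p * d + (d : ℝ) * ((d : ℝ) - 1) * μ2)) := by
  have hiju : (i : ℝ) < j := by exact_mod_cast hij
  have hjku : (j : ℝ) < k := by exact_mod_cast hjk
  have h1 : ((j : ℝ) - i) ≠ 0 := by nlinarith
  have h2 : ((k : ℝ) - j) ≠ 0 := by nlinarith
  have h3 : ((k : ℝ) - i) ≠ 0 := by nlinarith
  constructor
  · intro q hq0 hq1 hsupp hm1 hm2
    have e1 : q ⟨i, by omega⟩ + q ⟨j, by omega⟩ + q ⟨k, by omega⟩ = 1 := by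
      rw [← hq1]; exact (sum3_aux hij hjk hkd q hsupp).symm
    have e2 : (i : ℝ) * q ⟨i, by omega⟩ + (j : ℝ) * q ⟨j, by omega⟩ + (k : ℝ) * q ⟨k, by omega⟩
        = p * d := by
      rw [← hm1]
      exact (sum3_aux hij hjk hkd (fun l => (l.val : ℝ) * q l)
        (fun l a b c => by simp [hsupp l a b c])).symm
    have e3 : (i : ℝ)^2 * q ⟨i, by omega⟩ + (j : ℝ)^2 * q ⟨j, by omega⟩
        + (k : ℝ)^2 * q ⟨k, by omega⟩ = p * d + (d : ℝ) * ((d : ℝ) - 1) * μ2 := by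
      rw [← hm2]
      exact (sum3_aux hij hjk hkd (fun l => (l.val : ℝ)^2 * q l)
        (fun l a b c => by simp [hsupp l a b c])).symm
    have hvi : q ⟨i, by omega⟩ = qi := by
      rw [hqi, eq_div_iff (mul_ne_zero h3 h1)]
      linear_combination ((j:ℝ)*k) * e1 - ((j:ℝ)+k) * e2 + e3
    have hvj : q ⟨j, by omega⟩ = qj := by
      rw [hqj, ← neg_div, eq_div_iff (mul_ne_zero h2 h1)]
      linear_combination (-((i:ℝ)*k)) * e1 + ((i:ℝ)+k) * e2 - e3
    have hvk : q ⟨k, by omega⟩ = qk := by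
      rw [hqk, eq_div_iff (mul_ne_zero h2 h3)]
      linear_combination ((i:ℝ)*j) * e1 - ((i:ℝ)+j) * e2 + e3
    intro l
    refine ⟨fun hl => ?_, fun hl => ?_, fun hl => ?_⟩
    · have : l = ⟨i, by omega⟩ := Fin.ext hl
      rw [this]; exact hvi
    · have : l = ⟨j, by omega⟩ := Fin.ext hl
      rw [this]; exact hvj
    · have : l = ⟨k, by omega⟩ := Fin.ext hl
      rw [this]; exact hvk
  · intro hi0 hj0 hk0 q hqdef
    subst hqdef
    have hsupp : ∀ l : Fin (d + 1), l.val ≠ i → l.val ≠ j → l.val ≠ k →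
        (if l.val = i then qi else if l.val = j then qj else if l.val = k then qk else 0) = 0 := by
      intro l a b c; simp [a, b, c]
    have hji : j ≠ i := by omega
    have hki : k ≠ i := by omega
    have hkj : k ≠ j := by omega
    refine ⟨?_, ?_, ?_, ?_⟩
    · intro l
      by_cases a : l.val = i
      · simp [a, hi0]
      · by_cases b : l.val = j
        · simp [a, b, hji, hj0]
        · by_cases c : l.val = k
          · simp [a, b, c, hki, hkj, hk0]
          · simp [a, b, c]
    · rw [sum3_aux hij hjk hkd _ hsupp]
      simp only [Fin.val_mk, if_pos rfl, hji, hki, hkj, if_false, if_true]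
      rw [hqi, hqj, hqk]
      field_simp
      ring
    · rw [sum3_aux hij hjk hkd
        (fun l => (l.val : ℝ) *
          (if l.val = i then qi else if l.val = j then qj else if l.val = k then qk else 0))
        (fun l a b c => by simp [hsupp l a b c])]
      simp only [Fin.val_mk, if_pos rfl, hji, hki, hkj, if_false, if_true]
      rw [hqi, hqj, hqk]
      field_simp
      ring
    · rw [sum3_aux hij hjk hkd
        (fun l => (l.val : ℝ) ^ 2 *
          (if l.val = i then qi else if l.val = j then qj else if l.val = k then qk else 0))
        (fun l a b c => by simp [hsupp l a b c])]
      simp only [Fin.val_mk, if_pos rfl, hji, hki, hkj, if_false, if_true]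
      rw [hqi, hqj, hqk]
      field_simp
      ring
end

section
/- Let d ≥ 1 be an integer, p ∈ (0,1) with pd not an integer, α ∈ (0,1), and suppose (p − (1−α))·d/α < 0, i.e. p < 1−α. Then, over the family of ray densities r_{j1,j2} (integers 0 ≤ j1 < pd < j2 ≤ d), the minimum of VaR_α(r_{j1,j2}) equals 0 and the maximum of VaR_α(r_{j1,j2}) equals the largest integer strictly smaller than pd/(1−α). -/
open Finset

/-!
The distribution function of `r_{j1,j2}` is `0` below `j1`, equal to the mass
`a = (j2 - pd)/(j2 - j1)` on `[j1, j2)`, and `1` from `j2` on; so `VaR_α` is `j1` when `α ≤ a`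
and `j2` otherwise. In both cases `(1 - α) VaR < pd` (for `j2` this is `j2 - pd < α (j2 - j1)`),
which bounds the maximum. Conversely every `m` with `(1 - α) m < pd` is attained: by `r_{m,d}`
if `m < pd`, and by `r_{0,m}` if `m > pd`; the case `m = pd` is excluded since `pd ∉ ℤ`.
-/

/-- Value-at-Risk at level `α` of a pmf `f` on `{0,…,d}`:
`VaR_α(f) = min {y ∈ {0,…,d} : ∑_{j=0}^y f(j) ≥ α}`. -/
noncomputable def VaR (d : ℕ) (α : ℝ) (f : ℕ → ℝ) : ℕ :=
  sInf {y : ℕ | y ≤ d ∧ α ≤ ∑ j ∈ Finset.range (y + 1), f j}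

/-- The ray density `r_{j1,j2}` on `{0,…,d}`: mass `(j2 − pd)/(j2 − j1)` at `j1` and
`(pd − j1)/(j2 − j1)` at `j2`. -/
noncomputable def rayDensity (d : ℕ) (p : ℝ) (j1 j2 : ℕ) : ℕ → ℝ := fun j =>
  if j = j1 then ((j2 : ℝ) - p * d) / ((j2 : ℝ) - (j1 : ℝ))
  else if j = j2 then (p * d - (j1 : ℝ)) / ((j2 : ℝ) - (j1 : ℝ))
  else 0

lemma VaR_eq_of_le_of_lt {d : ℕ} {α : ℝ} {f : ℕ → ℝ} {y : ℕ} (hyd : y ≤ d)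
    (hy : α ≤ ∑ j ∈ range (y + 1), f j) (hlt : ∀ z < y, ∑ j ∈ range (z + 1), f j < α) :
    VaR d α f = y :=
  IsLeast.csInf_eq ⟨⟨hyd, hy⟩, fun z hz => not_lt.mp fun hzy => (hlt z hzy).not_ge hz.2⟩

lemma sum_range_rayDensity (d : ℕ) (p : ℝ) {j1 j2 : ℕ} (h : j1 < j2) (y : ℕ) :
    ∑ j ∈ range (y + 1), rayDensity d p j1 j2 j =
      (if j1 ≤ y then ((j2 : ℝ) - p * d) / ((j2 : ℝ) - j1) else 0) +
      (if j2 ≤ y then (p * d - j1) / ((j2 : ℝ) - j1) else 0) := by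
  have hsplit : ∀ j, rayDensity d p j1 j2 j =
      (if j = j1 then ((j2 : ℝ) - p * d) / ((j2 : ℝ) - j1) else 0) +
      (if j = j2 then (p * d - j1) / ((j2 : ℝ) - j1) else 0) := by
    intro j
    by_cases h1 : j = j1
    · subst h1; simp [rayDensity, h.ne]
    · by_cases h2 : j = j2 <;> simp [rayDensity, h1, h2, h.ne']
  simp only [hsplit, sum_add_distrib, sum_ite_eq', mem_range, Nat.lt_succ_iff]

section VaRRayDensity

variable {d : ℕ} {p α : ℝ} {j1 j2 : ℕ}

lemma VaR_rayDensity_eq_left (hα : 0 < α) (h : j1 < j2) (hj1 : j1 ≤ d)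
    (hmass : α ≤ ((j2 : ℝ) - p * d) / ((j2 : ℝ) - j1)) :
    VaR d α (rayDensity d p j1 j2) = j1 := by
  refine VaR_eq_of_le_of_lt hj1 ?_ fun z hz => ?_
  · simpa [sum_range_rayDensity d p h, h.not_ge] using hmass
  · simpa [sum_range_rayDensity d p h, hz.not_ge, (hz.trans h).not_ge] using hα

lemma VaR_rayDensity_eq_right (hα : 0 < α) (hα1 : α ≤ 1) (h : j1 < j2) (hj2 : j2 ≤ d)
    (hmass : ((j2 : ℝ) - p * d) / ((j2 : ℝ) - j1) < α) :
    VaR d α (rayDensity d p j1 j2) = j2 := by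
  have hgap : (j2 : ℝ) - j1 ≠ 0 := sub_ne_zero.mpr (by exact_mod_cast h.ne')
  have htotal : ((j2 : ℝ) - p * d) / ((j2 : ℝ) - j1) + (p * d - j1) / ((j2 : ℝ) - j1) = 1 := by
    field_simp
    ring
  refine VaR_eq_of_le_of_lt hj2 ?_ fun z hz => ?_
  · simpa [sum_range_rayDensity d p h, h.le, htotal] using hα1
  · rw [sum_range_rayDensity d p h, if_neg hz.not_ge, add_zero]
    split_ifs
    exacts [hmass, hα]

lemma one_sub_mul_VaR_rayDensity_lt (hα : α ∈ Set.Ioo (0 : ℝ) 1)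
    (hj1 : (j1 : ℝ) < p * d) (hj2 : p * d < j2) (hj2d : j2 ≤ d) :
    (1 - α) * VaR d α (rayDensity d p j1 j2) < p * d := by
  obtain ⟨hα0, hα1⟩ := hα
  have h : j1 < j2 := by exact_mod_cast hj1.trans hj2
  have hgap : (0 : ℝ) < (j2 : ℝ) - j1 := by linarith
  rcases le_or_gt α (((j2 : ℝ) - p * d) / ((j2 : ℝ) - j1)) with hmass | hmass
  · rw [VaR_rayDensity_eq_left hα0 h (h.le.trans hj2d) hmass]
    nlinarith [(j1.cast_nonneg : (0 : ℝ) ≤ j1)]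
  · rw [VaR_rayDensity_eq_right hα0 hα1.le h hj2d hmass]
    rw [div_lt_iff₀ hgap] at hmass
    nlinarith [(j1.cast_nonneg : (0 : ℝ) ≤ j1)]

lemma exists_VaR_rayDensity_eq (hα : α ∈ Set.Ioo (0 : ℝ) 1) (hpd : 0 < p * d)
    (hpd_lt : p * d < (1 - α) * d) {m : ℕ} (hm : (1 - α) * m < p * d)
    (hm_ne : (m : ℝ) ≠ p * d) :
    ∃ j1 j2 : ℕ, (j1 : ℝ) < p * d ∧ p * d < j2 ∧ j2 ≤ d ∧
      VaR d α (rayDensity d p j1 j2) = m := by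
  obtain ⟨hα0, hα1⟩ := hα
  have hmd : m < d := by
    have : (1 - α) * m < (1 - α) * d := hm.trans hpd_lt
    exact_mod_cast lt_of_mul_lt_mul_left this (by linarith)
  have hmd' : (m : ℝ) < d := by exact_mod_cast hmd
  rcases hm_ne.lt_or_gt with hlt | hgt
  · refine ⟨m, d, hlt, by nlinarith, le_rfl, VaR_rayDensity_eq_left hα0 hmd hmd.le ?_⟩
    rw [le_div_iff₀ (sub_pos.mpr hmd')]
    nlinarith [(m.cast_nonneg : (0 : ℝ) ≤ m)]
  · have hm0 : (0 : ℝ) < m := hpd.trans hgt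
    refine ⟨0, m, by simpa using hpd, hgt, hmd.le,
      VaR_rayDensity_eq_right hα0 hα1.le (by exact_mod_cast hm0) hmd.le ?_⟩
    rw [Nat.cast_zero, sub_zero, div_lt_iff₀ hm0]
    linarith

end VaRRayDensity

/-- If `pd` is not an integer and `(p − (1−α))d/α < 0`, then over the ray
densities `r_{j1,j2}` (`0 ≤ j1 < pd < j2 ≤ d`) the minimum of `VaR_α` is `0` and the maximum is
the largest integer strictly smaller than `pd/(1−α)`. -/
theorem stmt_15 (d : ℕ) (hd : 1 ≤ d) (p : ℝ) (hp : p ∈ Set.Ioo (0 : ℝ) 1)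
    (hnotint : ¬ ∃ k : ℕ, (k : ℝ) = p * d)
    (α : ℝ) (hα : α ∈ Set.Ioo (0 : ℝ) 1)
    (hneg : (p - (1 - α)) * d / α < 0)
    (S : Set ℕ)
    (hS : S = {v : ℕ | ∃ j1 j2 : ℕ, (j1 : ℝ) < p * d ∧ p * d < (j2 : ℝ) ∧ j2 ≤ d ∧
      v = VaR d α (rayDensity d p j1 j2)}) :
    IsLeast S 0 ∧
      ∀ j2star : ℕ,
        ((j2star : ℝ) < p * d / (1 - α) ∧ ∀ m : ℕ, (m : ℝ) < p * d / (1 - α) → m ≤ j2star) →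
        IsGreatest S j2star := by
  have hd0 : (0 : ℝ) < d := by exact_mod_cast hd
  have h1α : 0 < 1 - α := sub_pos.mpr hα.2
  have hp_lt : p < 1 - α := by
    have hmul : (p - (1 - α)) * d < 0 := by
      simpa [hα.1.ne'] using mul_neg_of_neg_of_pos hneg hα.1
    exact sub_neg.mp (neg_of_mul_neg_left hmul hd0.le)
  have hpd : 0 < p * d := mul_pos hp.1 hd0
  have hpd_lt : p * d < (1 - α) * d := mul_lt_mul_of_pos_right hp_lt hd0
  have hattained : ∀ m : ℕ, (1 - α) * m < p * d → m ∈ S := fun m hm => by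
    obtain ⟨j1, j2, hj1, hj2, hj2d, hVaR⟩ :=
      exists_VaR_rayDensity_eq hα hpd hpd_lt hm fun h => hnotint ⟨m, h⟩
    exact hS ▸ ⟨j1, j2, hj1, hj2, hj2d, hVaR.symm⟩
  refine ⟨⟨hattained 0 (by simpa using hpd), fun v _ => v.zero_le⟩, fun j2star ⟨hlt, hmax⟩ => ?_⟩
  refine ⟨hattained j2star (by rwa [lt_div_iff₀ h1α, mul_comm] at hlt), ?_⟩
  rintro v hv
  obtain ⟨j1, j2, hj1, hj2, hj2d, rfl⟩ := hS ▸ hv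
  apply hmax
  rw [lt_div_iff₀ h1α, mul_comm]
  exact one_sub_mul_VaR_rayDensity_lt hα hj1 hj2 hj2d
end
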